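/- arXiv:2107.03594 — 10 statements merged into one kernel-verified Lean document; each statement's English description precedes it below -/
import Mathlib

section
/- Let A be a primitive ring and R a central subring of A such that A is finitely generated as an R-module. Then R is a field. -/
/-!
Let `V` be a faithful simple right `A`-module. The central subring `R` acts on `V` by
`A`-linear maps, so by Schur's lemma every nonzero `r ∈ R` acts bijectively, i.e. `r V = V`.
Since `V` is a cyclic `A`-module and `A` is finite over `R`, `V` is a finite faithful `R`-module,
and Nakayama's lemma turns `r V = V` into invertibility of `r`.
-/

/-- A ring is (right) primitive if it admits a faithful simple right module. -/
def IsPrimitiveRing (A : Type u) [Ring A] : Prop :=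
  ∃ (V : Type u) (_ : AddCommGroup V) (_ : Module Aᵐᵒᵖ V),
    IsSimpleModule Aᵐᵒᵖ V ∧ ∀ a : A, (∀ v : V, MulOpposite.op a • v = 0) → a = 0

open Submodule in
theorem isUnit_of_surjective_smul {R M : Type*} [CommRing R] [AddCommGroup M] [Module R M]
    [Module.Finite R M] [FaithfulSMul R M] {r : R}
    (hr : Function.Surjective (r • · : M → M)) : IsUnit r := by
  have hle : (⊤ : Submodule R M) ≤ Ideal.span {r} • ⊤ := by
    rintro _ -
    obtain ⟨m, rfl⟩ := hr ‹_›
    exact smul_mem_smul (Ideal.mem_span_singleton_self r) mem_top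
  obtain ⟨s, hs, hsM⟩ :=
    exists_sub_one_mem_and_smul_eq_zero_of_fg_of_le_smul _ ⊤ Module.Finite.fg_top hle
  obtain rfl : s = 0 := eq_of_smul_eq_smul fun m ↦ by rw [hsM m mem_top, zero_smul]
  rw [zero_sub, neg_mem_iff, Ideal.mem_span_singleton] at hs
  exact isUnit_of_dvd_one hs

theorem isField_of_surjective_smul {R M : Type*} [CommRing R] [AddCommGroup M] [Module R M]
    [Module.Finite R M] [FaithfulSMul R M] [Nontrivial M]
    (h : ∀ r : R, r ≠ 0 → Function.Surjective (r • · : M → M)) : IsField R :=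
  have : Nontrivial R := Module.nontrivial R M
  ⟨exists_pair_ne R, mul_comm, fun hr ↦ (isUnit_of_surjective_smul (h _ hr)).exists_right_inv⟩

theorem IsSimpleModule.bijective_smul_of_ne_zero {R A M : Type*} [Ring A]
    [AddCommGroup M] [Module A M] [IsSimpleModule A M] [DistribSMul R M]
    [SMulCommClass R A M] {r : R} (hr : ∃ m : M, r • m ≠ 0) :
    Function.Bijective (r • · : M → M) := by
  obtain ⟨m, hm⟩ := hr
  exact (LinearMap.bijective_or_eq_zero (DistribSMul.toLinearMap A M r)).resolve_right
    fun h0 ↦ hm (LinearMap.congr_fun h0 m)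

theorem faithfulSMul_of_injective_algebraMap {R S M : Type*} [CommSemiring R] [Semiring S]
    [Algebra R S] [AddCommMonoid M] [Module S M] [Module R M] [IsScalarTower R S M]
    [FaithfulSMul S M] (h : Function.Injective (algebraMap R S)) : FaithfulSMul R M :=
  ⟨fun hrs ↦ h <| eq_of_smul_eq_smul (α := M) fun m ↦ by
    rw [algebraMap_smul, algebraMap_smul, hrs]⟩

theorem IsSimpleModule.isField_of_faithfulSMul {R A : Type*} (M : Type*) [CommRing R] [Ring A]
    [Algebra R A] [Module.Finite R A] [AddCommGroup M] [Module A M] [Module R M]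
    [IsScalarTower R A M] [IsSimpleModule A M] [FaithfulSMul R M] : IsField R := by
  have : Module.Finite R M := .trans A M
  have : Nontrivial M := IsSimpleModule.nontrivial A M
  refine isField_of_surjective_smul (M := M) fun r hr ↦ ?_
  have : ∃ m : M, r • m ≠ 0 := by
    by_contra! h
    exact hr (eq_of_smul_eq_smul fun m ↦ by rw [h m, zero_smul])
  exact (IsSimpleModule.bijective_smul_of_ne_zero (A := A) this).2

/-- If `A` is a primitive ring and `R` is a central subring of `A` (realized as a commutative
ring mapping injectively into the center of `A` via the algebra map) such that `A` is finitely
generated as an `R`-module, then `R` is a field. -/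
theorem stmt0 {R : Type v} {A : Type u} [CommRing R] [Ring A] [Algebra R A]
    (hinj : Function.Injective (algebraMap R A))
    [Module.Finite R A]
    (hprim : IsPrimitiveRing A) :
    IsField R := by
  obtain ⟨V, _, _, _, hfaith⟩ := hprim
  let : Module R V := Module.compHom V (algebraMap R Aᵐᵒᵖ)
  have : IsScalarTower R Aᵐᵒᵖ V := IsScalarTower.of_compHom R Aᵐᵒᵖ V
  have : FaithfulSMul Aᵐᵒᵖ V := ⟨fun {a b} h ↦ MulOpposite.unop_injective <| sub_eq_zero.mp <|
    hfaith _ fun v ↦ by simp [sub_smul, h v]⟩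
  have : FaithfulSMul R V :=
    faithfulSMul_of_injective_algebraMap (S := Aᵐᵒᵖ) (MulOpposite.op_injective.comp hinj)
  have : Module.Finite R Aᵐᵒᵖ := .equiv (MulOpposite.opLinearEquiv R)
  exact IsSimpleModule.isField_of_faithfulSMul (A := Aᵐᵒᵖ) V
end

section
/- Let A be a ring and R a central subring of A such that A is finitely generated as an R-module. For every primitive ideal P of A, the contraction P ∩ R is a maximal ideal of R. -/
/-- The contraction `P ∩ R` of a two-sided ideal of `A` to the central subring `R`. -/
def TwoSidedIdeal.contract {R : Type v} {A : Type u} [CommRing R] [Ring A] [Algebra R A]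
    (P : TwoSidedIdeal A) : Ideal R :=
  (TwoSidedIdeal.asIdeal P).comap (algebraMap R A)

section SimpleModule

variable {R V : Type*} [CommRing R] [AddCommGroup V] [Module R V]

theorem Submodule.ideal_smul_top_eq_bot_or_eq_top (S : Type*) [Ring S] [Module S V]
    [SMulCommClass R S V] [IsSimpleModule S V] (I : Ideal R) :
    I • (⊤ : Submodule R V) = ⊥ ∨ I • (⊤ : Submodule R V) = ⊤ := by
  let IV : Submodule S V :=
    { carrier := (I • ⊤ : Submodule R V)
      add_mem' := add_mem
      zero_mem' := zero_mem _
      smul_mem' := fun s v hv => by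
        refine Submodule.smul_induction_on hv (fun r hr w _ => ?_) (fun x y hx hy => ?_)
        · rw [← smul_comm r s w]
          exact Submodule.smul_mem_smul hr trivial
        · rw [smul_add]
          exact add_mem hx hy }
  rcases IsSimpleOrder.eq_bot_or_eq_top IV with h | h
  · exact .inl (Submodule.ext fun v => SetLike.ext_iff.mp h v)
  · exact .inr (Submodule.ext fun v => SetLike.ext_iff.mp h v)

theorem Module.annihilator_isMaximal_of_isSimpleModule (S : Type*) [Ring S] [Module S V]
    [SMulCommClass R S V] [IsSimpleModule S V] [Module.Finite R V] :
    (Module.annihilator R V).IsMaximal := by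
  have : Nontrivial V := IsSimpleModule.nontrivial S V
  have hne : Module.annihilator R V ≠ ⊤ :=
    (Module.annihilator_eq_top_iff (R := R)).not.mpr (not_subsingleton V)
  obtain ⟨m, hm, hann⟩ := Ideal.exists_le_maximal _ hne
  suffices m ≤ Module.annihilator R V by rwa [← le_antisymm this hann]
  rcases Submodule.ideal_smul_top_eq_bot_or_eq_top S (V := V) m with h | h
  · rwa [← Submodule.annihilator_top, Submodule.le_annihilator_iff]
  · obtain ⟨r, hr1, hr0⟩ :=
      Submodule.exists_sub_one_mem_and_smul_eq_zero_of_fg_of_le_smul m ⊤ Module.Finite.fg_top h.ge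
    have hr : r ∈ m := hann (Module.mem_annihilator.mpr fun v => hr0 v trivial)
    exact absurd (by simpa using m.sub_mem hr hr1) ((Ideal.ne_top_iff_one m).mp hm.ne_top)

end SimpleModule

theorem RingHom.ker_algebraMap_isMaximal_of_isSimpleModule {R S V : Type*} [CommRing R]
    [Ring S] [Algebra R S] [Module.Finite R S] [AddCommGroup V] [Module S V]
    [IsSimpleModule S V] [FaithfulSMul S V] : (RingHom.ker (algebraMap R S)).IsMaximal := by
  let : Module R V := Module.compHom V (algebraMap R S)
  have : IsScalarTower R S V := ⟨fun r s v => by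
    show (r • s) • v = algebraMap R S r • s • v
    rw [Algebra.smul_def, mul_smul]⟩
  have : Module.Finite R V := Module.Finite.trans S V
  convert Module.annihilator_isMaximal_of_isSimpleModule S (R := R) (V := V) using 1
  ext r
  rw [RingHom.mem_ker, Module.mem_annihilator]
  refine ⟨fun h v => by rw [← algebraMap_smul S, h, zero_smul], fun h => ?_⟩
  exact FaithfulSMul.eq_of_smul_eq_smul (α := V) fun v => by rw [algebraMap_smul, h, zero_smul]

theorem stmt1_general {R : Type v} {A : Type u} [CommRing R] [Ring A] [Algebra R A]
    [Module.Finite R A]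
    (P : TwoSidedIdeal A) (hP : IsPrimitiveRing P.ringCon.Quotient) :
    (P.contract (R := R)).IsMaximal := by
  obtain ⟨V, _, _, _, hfaith⟩ := hP
  have : FaithfulSMul P.ringCon.Quotientᵐᵒᵖ V := ⟨fun {a b} h => sub_eq_zero.mp <|
    (MulOpposite.unop_eq_zero_iff _).mp <| hfaith _ fun v => by
      rw [MulOpposite.op_unop, sub_smul, h, sub_self]⟩
  have : Module.Finite R P.ringCon.Quotient :=
    Module.Finite.of_surjective (RingCon.mkₐ R P.ringCon).toLinearMap
      (RingCon.mkₐ_surjective (α := R) _)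
  convert RingHom.ker_algebraMap_isMaximal_of_isSimpleModule
    (R := R) (S := P.ringCon.Quotientᵐᵒᵖ) (V := V) using 1
  ext r
  rw [RingHom.mem_ker, TwoSidedIdeal.contract, Ideal.mem_comap, TwoSidedIdeal.mem_asIdeal,
    MulOpposite.algebraMap_apply, MulOpposite.op_eq_zero_iff, ← RingCon.coe_algebraMap,
    TwoSidedIdeal.mem_iff, ← RingCon.eq, RingCon.coe_zero]

/-- Let `R` be a central subring of `A` such that `A` is a finitely generated `R`-module.
For every primitive (two-sided) ideal `P` of `A` (i.e. `A/P` is a primitive ring),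
the contraction `P ∩ R` is a maximal ideal of `R`. -/
theorem stmt1 {R : Type v} {A : Type u} [CommRing R] [Ring A] [Algebra R A]
    (hinj : Function.Injective (algebraMap R A))
    [Module.Finite R A]
    (P : TwoSidedIdeal A) (hP : IsPrimitiveRing P.ringCon.Quotient) :
    (P.contract (R := R)).IsMaximal :=
  stmt1_general P hP
end

section
/- Let A be a ring and R a central subring of A such that A is finitely generated as an R-module. If P is a prime ideal of A such that P ∩ R is a maximal ideal of R, then P is a maximal ideal of A. -/
/-- A two-sided ideal `P` of a ring `A` is prime if it is proper and whenever
`a x b ∈ P` for all `x`, then `a ∈ P` or `b ∈ P`. -/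
def TwoSidedIdeal.IsPrimeTS {A : Type u} [Ring A] (P : TwoSidedIdeal A) : Prop :=
  P ≠ ⊤ ∧ ∀ a b : A, (∀ x : A, a * x * b ∈ P) → a ∈ P ∨ b ∈ P

/-!
`A ⧸ P` is a prime ring that is finite-dimensional over the field `R ⧸ (P ∩ R)`, hence
artinian. The Jacobson radical of an artinian ring is nilpotent, and a prime ring has no
nonzero nilpotent ideals, so `A ⧸ P` is semisimple. A nonzero two-sided ideal `I` of a
semisimple ring has a complementary left ideal `K` with `I * K ⊆ I ⊓ K = 0`, so primality
forces `K = 0` and `I = ⊤`: `A ⧸ P` is simple, i.e. `P` is maximal.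
-/

section PrimeRing

variable {B : Type*} [Ring B]

theorem TwoSidedIdeal.IsPrimeTS.eq_bot_or_eq_bot (hB : (⊥ : TwoSidedIdeal B).IsPrimeTS)
    {I J : Ideal B} (h : ∀ a ∈ I, ∀ x, ∀ b ∈ J, a * x * b = 0) : I = ⊥ ∨ J = ⊥ := by
  by_contra! hIJ
  obtain ⟨a, ha, ha0⟩ := Submodule.exists_mem_ne_zero_of_ne_bot hIJ.1
  obtain ⟨b, hb, hb0⟩ := Submodule.exists_mem_ne_zero_of_ne_bot hIJ.2
  have := hB.2 a b fun x => (TwoSidedIdeal.mem_bot B).2 (h a ha x b hb)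
  simp_all

theorem TwoSidedIdeal.IsPrimeTS.eq_bot_of_isNilpotent (hB : (⊥ : TwoSidedIdeal B).IsPrimeTS)
    {I : Ideal B} [I.IsTwoSided] (hI : IsNilpotent I) : I = ⊥ := by
  obtain ⟨n, hn⟩ := hI
  rw [Ideal.zero_eq_bot] at hn
  induction n with
  | zero =>
    rw [Submodule.pow_zero, Ideal.one_eq_top] at hn
    exact eq_bot_iff.2 (hn ▸ le_top)
  | succ n ih =>
    refine (hB.eq_bot_or_eq_bot fun a ha x b hb => ?_).elim ih id
    rw [← Submodule.mem_bot B, ← hn, Submodule.pow_succ]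
    exact Ideal.mul_mem_mul (Ideal.mul_mem_right _ _ ha) hb

theorem TwoSidedIdeal.IsPrimeTS.isSemisimpleRing [IsArtinianRing B]
    (hB : (⊥ : TwoSidedIdeal B).IsPrimeTS) : IsSemisimpleRing B :=
  IsArtinianRing.isSemisimpleRing_iff_jacobson.2 <|
    Ideal.jacobson_bot (R := B) ▸ hB.eq_bot_of_isNilpotent IsArtinianRing.isNilpotent_jacobson_bot

theorem TwoSidedIdeal.IsPrimeTS.eq_top_of_ne_bot [IsSemisimpleRing B]
    (hB : (⊥ : TwoSidedIdeal B).IsPrimeTS) {I : Ideal B} [I.IsTwoSided] (hI : I ≠ ⊥) :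
    I = ⊤ := by
  obtain ⟨J, hIJ⟩ := exists_isCompl I
  refine eq_top_of_isCompl_bot ((hB.eq_bot_or_eq_bot fun a ha x b hb => ?_).resolve_left hI ▸ hIJ)
  rw [← Submodule.mem_bot B, ← hIJ.inf_eq_bot]
  exact ⟨Ideal.mul_mem_right _ _ (Ideal.mul_mem_right _ _ ha), J.mul_mem_left _ hb⟩

end PrimeRing

theorem TwoSidedIdeal.IsPrimeTS.isPrimeTS_bot_quotient {A : Type*} [Ring A] {P : TwoSidedIdeal A}
    (hP : P.IsPrimeTS) : (⊥ : TwoSidedIdeal (A ⧸ P.asIdeal)).IsPrimeTS := by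
  refine ⟨fun h => hP.1 (P.one_mem_iff.1 ?_), fun a b h => ?_⟩
  · have := (⊥ : TwoSidedIdeal (A ⧸ P.asIdeal)).one_mem_iff.2 h
    rwa [TwoSidedIdeal.mem_bot, ← map_one (Ideal.Quotient.mk _), Ideal.Quotient.eq_zero_iff_mem,
      TwoSidedIdeal.mem_asIdeal] at this
  obtain ⟨a, rfl⟩ := Ideal.Quotient.mk_surjective a
  obtain ⟨b, rfl⟩ := Ideal.Quotient.mk_surjective b
  simp only [TwoSidedIdeal.mem_bot, Ideal.Quotient.eq_zero_iff_mem, TwoSidedIdeal.mem_asIdeal]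
    at h ⊢
  refine hP.2 a b fun x => ?_
  simpa [← map_mul, Ideal.Quotient.eq_zero_iff_mem] using h (Ideal.Quotient.mk _ x)

theorem Ideal.isArtinianRing_quotient_of_isMaximal_comap {R A : Type*} [CommRing R] [Ring A]
    [Algebra R A] [Module.Finite R A] (I : Ideal A) [I.IsTwoSided]
    (hI : (I.comap (algebraMap R A)).IsMaximal) : IsArtinianRing (A ⧸ I) := by
  let _ := Ideal.Quotient.field (I.comap (algebraMap R A))
  have : IsScalarTower R (R ⧸ I.comap (algebraMap R A)) (A ⧸ I) :=
    IsScalarTower.of_algebraMap_eq fun _ => rfl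
  have := Module.Finite.of_restrictScalars_finite R (R ⧸ I.comap (algebraMap R A)) (A ⧸ I)
  exact IsArtinianRing.of_finite (R ⧸ I.comap (algebraMap R A)) (A ⧸ I)

theorem TwoSidedIdeal.IsPrimeTS.isCoatom_of_isArtinianRing {A : Type*} [Ring A]
    {P : TwoSidedIdeal A} (hP : P.IsPrimeTS) [IsArtinianRing (A ⧸ P.asIdeal)] : IsCoatom P := by
  have hB := hP.isPrimeTS_bot_quotient
  have := hB.isSemisimpleRing
  refine ⟨hP.1, fun Q hPQ => Q.one_mem_iff.1 ?_⟩
  obtain ⟨a, haQ, haP⟩ := SetLike.exists_of_lt hPQ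
  let J := Q.asIdeal.map (Ideal.Quotient.mk P.asIdeal)
  have hJ : J ≠ ⊥ := fun h => haP <| by
    have : Ideal.Quotient.mk P.asIdeal a ∈ J :=
      Ideal.mem_map_of_mem _ (TwoSidedIdeal.mem_asIdeal.2 haQ)
    rwa [h, Ideal.mem_bot, Ideal.Quotient.eq_zero_iff_mem, TwoSidedIdeal.mem_asIdeal] at this
  have h1 : (1 : A) ∈ J.comap (Ideal.Quotient.mk P.asIdeal) := by
    simp [hB.eq_top_of_ne_bot hJ]
  rwa [Ideal.comap_map_mk (TwoSidedIdeal.asIdeal.monotone hPQ.le), TwoSidedIdeal.mem_asIdeal] at h1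

theorem stmt2_general {R : Type v} {A : Type u} [CommRing R] [Ring A] [Algebra R A]
    [Module.Finite R A]
    (P : TwoSidedIdeal A) (hP : P.IsPrimeTS)
    (hmax : (P.contract (R := R)).IsMaximal) :
    IsCoatom P := by
  have := P.asIdeal.isArtinianRing_quotient_of_isMaximal_comap hmax
  exact hP.isCoatom_of_isArtinianRing

/-- Let `R` be a central subring of `A` such that `A` is a finitely generated `R`-module.
If `P` is a prime two-sided ideal of `A` whose contraction `P ∩ R` is a maximal ideal of `R`,
then `P` is a maximal two-sided ideal of `A`. -/
theorem stmt2 {R : Type v} {A : Type u} [CommRing R] [Ring A] [Algebra R A]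
    (hinj : Function.Injective (algebraMap R A))
    [Module.Finite R A]
    (P : TwoSidedIdeal A) (hP : P.IsPrimeTS)
    (hmax : (P.contract (R := R)).IsMaximal) :
    IsCoatom P :=
  stmt2_general P hP hmax
end

section
/- Let A be a ring and R a central subring of A such that A is finitely generated as an R-module. Then the map π : Spec A → Spec R given by P ↦ P ∩ R is surjective (lying over holds). -/
/-! Let `S` be the image of `R \ p` in `A`. Since `A` is a finite faithful `R`-module, `p` lies in
the support of `A / pA`, so no `r ∉ p` annihilates `A / pA`; in particular `pA` misses `S`.
By Zorn, `pA` lies in a two-sided ideal `P` maximal among those missing the multiplicative set `S`,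
and such a `P` is prime: if `a, b ∉ P`, then `P + AaA` and `P + AbA` both meet `S`, while
`aAb ⊆ P` forces their product into `P`. Finally `P ∩ R` contains `p` and misses `R \ p`. -/

namespace TwoSidedIdeal

variable {A : Type*} [Ring A]

theorem mem_sSup_of_directedOn {c : Set (TwoSidedIdeal A)} (hne : c.Nonempty)
    (hc : DirectedOn (· ≤ ·) c) {x : A} : x ∈ sSup c ↔ ∃ I ∈ c, x ∈ I := by
  refine ⟨fun hx => ?_, fun ⟨I, hI, hxI⟩ => le_sSup hI hxI⟩
  let U : TwoSidedIdeal A := .mk' {x | ∃ I ∈ c, x ∈ I}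
    (hne.imp fun I hI => ⟨hI, I.zero_mem⟩)
    (fun ⟨I, hI, hx⟩ ⟨J, hJ, hy⟩ =>
      let ⟨K, hK, hIK, hJK⟩ := hc I hI J hJ
      ⟨K, hK, K.add_mem (hIK hx) (hJK hy)⟩)
    (fun ⟨I, hI, hx⟩ => ⟨I, hI, I.neg_mem hx⟩)
    (fun ⟨I, hI, hy⟩ => ⟨I, hI, I.mul_mem_left _ _ hy⟩)
    (fun ⟨I, hI, hx⟩ => ⟨I, hI, I.mul_mem_right _ _ hx⟩)
  have hU : sSup c ≤ U := sSup_le fun I hI y hy => (mem_mk' ..).2 ⟨I, hI, hy⟩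
  simpa [U] using hU hx

theorem exists_le_maximal_disjoint (S : Set A) {I : TwoSidedIdeal A}
    (hI : Disjoint (I : Set A) S) :
    ∃ P, I ≤ P ∧ Maximal (fun Q : TwoSidedIdeal A => Disjoint (Q : Set A) S) P := by
  refine zorn_le_nonempty₀ _ (fun c hcS hc J hJ => ⟨sSup c, ?_, fun _ => le_sSup⟩) I hI
  refine Set.disjoint_left.2 fun x hx => ?_
  obtain ⟨Q, hQ, hxQ⟩ := (mem_sSup_of_directedOn ⟨J, hJ⟩ hc.directedOn).1 hx
  exact Set.disjoint_left.1 (hcS hQ) hxQ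

section Span

variable {P : TwoSidedIdeal A} {a b : A}

theorem mul_mul_mem_of_mem_span_left (h : ∀ x, a * x * b ∈ P) {u : A} (hu : u ∈ span {a}) :
    ∀ x, u * x * b ∈ P := by
  induction hu using span_induction with
  | mem y hy => rwa [Set.mem_singleton_iff.1 hy]
  | zero => simp
  | add y z _ _ hy hz => intro x; simpa only [add_mul] using P.add_mem (hy x) (hz x)
  | neg y _ hy => intro x; simpa only [neg_mul] using P.neg_mem (hy x)
  | left_absorb c y _ hy => intro x; simpa only [mul_assoc] using P.mul_mem_left c _ (hy x)
  | right_absorb c y _ hy => intro x; simpa only [mul_assoc] using hy (c * x)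

theorem mul_mul_mem_of_mem_span_right (h : ∀ x, a * x * b ∈ P) {v : A} (hv : v ∈ span {b}) :
    ∀ x, a * x * v ∈ P := by
  induction hv using span_induction with
  | mem y hy => rwa [Set.mem_singleton_iff.1 hy]
  | zero => simp
  | add y z _ _ hy hz => intro x; simpa only [mul_add] using P.add_mem (hy x) (hz x)
  | neg y _ hy => intro x; simpa only [mul_neg] using P.neg_mem (hy x)
  | left_absorb c y _ hy => intro x; simpa only [mul_assoc] using hy (x * c)
  | right_absorb c y _ hy => intro x; simpa only [mul_assoc] using P.mul_mem_right _ c (hy x)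

theorem mul_mem_of_mem_sup_span (h : ∀ x, a * x * b ∈ P) {u v : A}
    (hu : u ∈ P ⊔ span {a}) (hv : v ∈ P ⊔ span {b}) : u * v ∈ P := by
  obtain ⟨y, hy, z, hz, rfl⟩ := mem_sup.1 hu
  obtain ⟨y', hy', z', hz', rfl⟩ := mem_sup.1 hv
  have hzz' : z * z' ∈ P := by
    simpa using mul_mul_mem_of_mem_span_right (mul_mul_mem_of_mem_span_left h hz) hz' 1
  rw [add_mul, mul_add z]
  exact P.add_mem (P.mul_mem_right _ _ hy) (P.add_mem (P.mul_mem_left _ _ hy') hzz')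

end Span

theorem isPrimeTS_of_maximal_disjoint {S : Submonoid A} {P : TwoSidedIdeal A}
    (hP : Maximal (fun I : TwoSidedIdeal A => Disjoint (I : Set A) S) P) : P.IsPrimeTS := by
  have meets : ∀ a ∉ P, ∃ s ∈ S, s ∈ P ⊔ span {a} := by
    intro a ha
    by_contra! h
    have hle : P ⊔ span {a} ≤ P := hP.2 (Set.disjoint_right.2 h) le_sup_left
    exact ha (hle (mem_sup_right (subset_span rfl)))
  refine ⟨fun htop => Set.disjoint_left.1 hP.1 (by simp [htop]) S.one_mem, fun a b hab => ?_⟩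
  by_contra! h
  obtain ⟨s, hs, hsa⟩ := meets a h.1
  obtain ⟨t, ht, htb⟩ := meets b h.2
  exact Set.disjoint_left.1 hP.1 (mul_mem_of_mem_sup_span hab hsa htb) (S.mul_mem hs ht)

end TwoSidedIdeal

section Extension

variable {R A : Type*} [CommRing R] [Ring A] [Algebra R A]

variable (A) in
def Ideal.twoSidedExtension (p : Ideal R) : TwoSidedIdeal A :=
  .mk' ((p • ⊤ : Submodule R A) : Set A) (zero_mem _) (add_mem · ·) (neg_mem ·)
    (fun {x} _ hy => Submodule.smul_top_le_comap_smul_top p (LinearMap.mulLeft R x) hy)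
    (fun {_ y} hx => Submodule.smul_top_le_comap_smul_top p (LinearMap.mulRight R y) hx)

theorem Ideal.mem_twoSidedExtension {p : Ideal R} {x : A} :
    x ∈ p.twoSidedExtension A ↔ x ∈ p • (⊤ : Submodule R A) :=
  TwoSidedIdeal.mem_mk' ..

theorem Ideal.algebraMap_mem_smul_top_iff [Module.Finite R A] {p : Ideal R} (hp : p.IsPrime)
    (hker : RingHom.ker (algebraMap R A) ≤ p) {r : R} :
    algebraMap R A r ∈ p • (⊤ : Submodule R A) ↔ r ∈ p := by
  refine ⟨fun h => ?_, fun hr => ?_⟩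
  · have hann : r ∈ Module.annihilator R (A ⧸ p • (⊤ : Submodule R A)) := by
      rw [Submodule.annihilator_quotient]
      refine Submodule.mem_colon.2 fun a _ => ?_
      rw [Algebra.smul_def r]
      exact Submodule.smul_top_le_comap_smul_top p (LinearMap.mulRight R a) h
    have hsupp :
        (⟨p, hp⟩ : PrimeSpectrum R) ∈ Module.support R (A ⧸ p • (⊤ : Submodule R A)) := by
      rw [Module.support_quotient, Module.support_of_algebra]
      exact ⟨hker, (PrimeSpectrum.mem_zeroLocus _ _).2 le_rfl⟩
    exact Module.annihilator_le_of_mem_support hsupp hann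
  · rw [Algebra.algebraMap_eq_smul_one]
    exact Submodule.smul_mem_smul hr Submodule.mem_top

end Extension

/-- Lying over: if `R` is a central subring of `A` and `A` is a finitely generated `R`-module,
then the contraction map `π : Spec A → Spec R`, `P ↦ P ∩ R`, is surjective: every prime ideal
of `R` is the contraction of some prime two-sided ideal of `A`. -/
theorem stmt3 {R : Type v} {A : Type u} [CommRing R] [Ring A] [Algebra R A]
    (hinj : Function.Injective (algebraMap R A))
    [Module.Finite R A]
    (p : Ideal R) (hp : p.IsPrime) :
    ∃ P : TwoSidedIdeal A, P.IsPrimeTS ∧ P.contract (R := R) = p := by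
  have hker : RingHom.ker (algebraMap R A) ≤ p :=
    ((RingHom.injective_iff_ker_eq_bot _).1 hinj).trans_le bot_le
  let S : Submonoid A := p.primeCompl.map (algebraMap R A)
  have hdisj : Disjoint (p.twoSidedExtension A : Set A) S := by
    refine Set.disjoint_left.2 fun _ hx ⟨r, hr, hrx⟩ => hr ?_
    rw [← hrx, SetLike.mem_coe, Ideal.mem_twoSidedExtension] at hx
    exact (p.algebraMap_mem_smul_top_iff hp hker).1 hx
  obtain ⟨P, hpP, hP⟩ := TwoSidedIdeal.exists_le_maximal_disjoint (S : Set A) hdisj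
  refine ⟨P, TwoSidedIdeal.isPrimeTS_of_maximal_disjoint hP, le_antisymm (fun r hr => ?_) ?_⟩
  · by_contra hrp
    exact Set.disjoint_left.1 hP.1 hr ⟨r, hrp, rfl⟩
  · intro r hr
    exact hpP (Ideal.mem_twoSidedExtension.2 ((p.algebraMap_mem_smul_top_iff hp hker).2 hr))
end

section
/- Let A be a ring and R a central subring of A such that A is finitely generated as an R-module. Then the Jacobson radical of R equals J(A) ∩ R, where J(A) is the Jacobson radical of A. -/
/-!
Going up: if `r ∈ J(R)` and `M` is a maximal left ideal of `A` missing `r`, then `A = M + rA`,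
so `A = M + J(R) • A` as `R`-modules and Nakayama forces `M = A`.
Going down: if `r ∈ J(A)` then every `1 + r y` (`y ∈ R`) is invertible in `A`; since `A` is a
finite faithful `R`-module, an element of `R` invertible in `A` lies in no maximal ideal `m` of `R`
(otherwise `A = m • A`, and Nakayama produces `t ≡ 1 mod m` with `t • 1 = 0`, i.e. `t = 0`).
-/

namespace Algebra

variable {R A : Type*} [CommRing R] [Ring A] [Algebra R A] [Module.Finite R A]

theorem algebraMap_mem_jacobson_bot {r : R} (hr : r ∈ (⊥ : Ideal R).jacobson) :
    algebraMap R A r ∈ (⊥ : Ideal A).jacobson := by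
  rw [Ideal.jacobson, Submodule.mem_sInf]
  rintro M ⟨-, hM⟩
  by_contra hrM
  obtain ⟨y, i, hi, hyi⟩ := hM.exists_inv hrM
  have hcover : (⊤ : Submodule R A) ≤
      M.restrictScalars R ⊔ (⊥ : Ideal R).jacobson • (⊤ : Submodule R A) := by
    intro b _
    have hb : b = b * i + r • (b * y) := by
      conv_lhs => rw [← mul_one b, ← hyi]
      rw [mul_add, add_comm, smul_def, commutes, mul_assoc]
    rw [hb]
    exact Submodule.add_mem _ (Submodule.mem_sup_left (Ideal.mul_mem_left M b hi))
      (Submodule.mem_sup_right (Submodule.smul_mem_smul hr Submodule.mem_top))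
  have htop := Submodule.le_of_le_smul_of_le_jacobson_bot Module.Finite.fg_top le_rfl hcover
  exact hM.ne_top (top_le_iff.1 fun a _ => htop Submodule.mem_top)

theorem isUnit_of_mul_algebraMap_eq_one (hinj : Function.Injective (algebraMap R A))
    {s : R} {v : A} (hv : v * algebraMap R A s = 1) : IsUnit s := by
  by_contra hs
  obtain ⟨m, hm, hsm⟩ := exists_max_ideal_of_mem_nonunits hs
  have hcover : (⊤ : Submodule R A) ≤ m • ⊤ := by
    intro a _
    have ha : a = s • (v * a) := by
      rw [smul_def, ← mul_assoc, commutes, hv, one_mul]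
    rw [ha]
    exact Submodule.smul_mem_smul hsm Submodule.mem_top
  obtain ⟨t, ht, htA⟩ := Submodule.exists_sub_one_mem_and_smul_eq_zero_of_fg_of_le_smul m ⊤
    Module.Finite.fg_top hcover
  have ht0 : t = 0 := hinj (by rw [← mul_one (algebraMap R A t), ← smul_def,
    htA 1 Submodule.mem_top, map_zero])
  rw [ht0, zero_sub, neg_mem_iff] at ht
  exact hm.ne_top (m.eq_top_of_isUnit_mem ht isUnit_one)

theorem mem_jacobson_bot_of_algebraMap_mem (hinj : Function.Injective (algebraMap R A)) {r : R}
    (hr : algebraMap R A r ∈ (⊥ : Ideal A).jacobson) : r ∈ (⊥ : Ideal R).jacobson := by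
  refine Ideal.mem_jacobson_bot.2 fun y => ?_
  obtain ⟨z, hz⟩ := Ideal.mem_jacobson_iff.1 hr (algebraMap R A y)
  rw [Ideal.mem_bot, sub_eq_zero] at hz
  refine isUnit_of_mul_algebraMap_eq_one hinj (v := z) ?_
  rw [mul_comm, map_add, map_mul, map_one, mul_add, mul_one, ← mul_assoc]
  exact hz

end Algebra

/-- Let `R` be a central subring of `A` such that `A` is a finitely generated `R`-module.
Then the Jacobson radical of `R` equals `J(A) ∩ R`, where `J(A)` is the Jacobson radical of `A`
(the intersection of all maximal right ideals of `A`, here realized as left ideals of `Aᵐᵒᵖ`). -/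
theorem stmt4 {R : Type v} {A : Type u} [CommRing R] [Ring A] [Algebra R A]
    (hinj : Function.Injective (algebraMap R A))
    [Module.Finite R A] :
    ∀ r : R, r ∈ (⊥ : Ideal R).jacobson ↔
      MulOpposite.op (algebraMap R A r) ∈ (⊥ : Ideal Aᵐᵒᵖ).jacobson := fun _ =>
  ⟨Algebra.algebraMap_mem_jacobson_bot (A := Aᵐᵒᵖ),
    Algebra.mem_jacobson_bot_of_algebraMap_mem (A := Aᵐᵒᵖ) (MulOpposite.op_injective.comp hinj)⟩
end

section
/- Let A be a ring and R a central subring of A such that A is finitely generated as an R-module. If R is a Jacobson ring, then A is a Jacobson ring, i.e., for every prime ideal P of A, the Jacobson radical of A/P is zero. -/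
open Pointwise Module Submodule TensorProduct

namespace TwoSidedIdeal

variable {A : Type*} [Ring A] {P : TwoSidedIdeal A}

theorem coe_ringCon_eq_zero_iff (P : TwoSidedIdeal A) (a : A) :
    (a : P.ringCon.Quotient) = 0 ↔ a ∈ P :=
  RingCon.eq P.ringCon

theorem IsPrimeTS.nontrivial (hP : P.IsPrimeTS) : Nontrivial P.ringCon.Quotient :=
  ⟨1, 0, fun h => hP.1 (P.eq_top ((P.coe_ringCon_eq_zero_iff 1).mp (by exact_mod_cast h)))⟩

theorem IsPrimeTS.eq_zero_or_eq_zero (hP : P.IsPrimeTS) (a b : P.ringCon.Quotient)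
    (h : ∀ x, a * x * b = 0) : a = 0 ∨ b = 0 := by
  obtain ⟨a, rfl⟩ := P.ringCon.mk'_surjective a
  obtain ⟨b, rfl⟩ := P.ringCon.mk'_surjective b
  simp only [RingCon.coe_mk', coe_ringCon_eq_zero_iff]
  refine hP.2 a b fun x => (P.coe_ringCon_eq_zero_iff _).mp ?_
  exact_mod_cast h x

end TwoSidedIdeal

section PrimeRing

variable {R B : Type*} [CommRing R] [Ring B] [Algebra R B]

theorem Ideal.eq_bot_of_pow_subset_zero (hB : ∀ a b : B, (∀ x, a * x * b = 0) → a = 0 ∨ b = 0)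
    (I : Ideal B) : ∀ {n : ℕ}, (I : Set B) ^ n ⊆ {0} → I = ⊥
  | 0, h => by
    have : Subsingleton B := subsingleton_of_zero_eq_one (h rfl).symm
    exact Subsingleton.elim _ _
  | n + 1, h => by
    by_contra hI
    obtain ⟨v, hvI, hv⟩ := exists_mem_ne_zero_of_ne_bot hI
    refine hI (eq_bot_of_pow_subset_zero hB I (n := n) fun u hu => ?_)
    refine (hB u v fun x => ?_).resolve_right hv
    rw [mul_assoc]
    exact h (pow_succ (I : Set B) n ▸ Set.mul_mem_mul hu (I.mul_mem_left x hvI))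

theorem eq_zero_or_algebraMap_eq_zero_of_mul_algebraMap
    (hB : ∀ a b : B, (∀ x, a * x * b = 0) → a = 0 ∨ b = 0) {x : B} {r : R}
    (h : x * algebraMap R B r = 0) : x = 0 ∨ algebraMap R B r = 0 :=
  hB x _ fun y => by rw [mul_assoc, ← Algebra.commutes, ← mul_assoc, h, zero_mul]

theorem isPrime_ker_algebraMap [Nontrivial B]
    (hB : ∀ a b : B, (∀ x, a * x * b = 0) → a = 0 ∨ b = 0) :
    (RingHom.ker (algebraMap R B)).IsPrime where
  ne_top' := RingHom.ker_ne_top _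
  mem_or_mem' {a b} hab := by
    rw [RingHom.mem_ker, map_mul] at hab
    exact eq_zero_or_algebraMap_eq_zero_of_mul_algebraMap hB hab

theorem isTorsionFree_of_injective_algebraMap [Nontrivial R]
    (hB : ∀ a b : B, (∀ x, a * x * b = 0) → a = 0 ∨ b = 0)
    (hinj : Function.Injective (algebraMap R B)) : IsTorsionFree R B := by
  refine .of_smul_eq_zero fun r x h => ?_
  rw [Algebra.smul_def, Algebra.commutes] at h
  rcases eq_zero_or_algebraMap_eq_zero_of_mul_algebraMap hB h with h | h
  · exact Or.inr h
  · exact Or.inl ((map_eq_zero_iff _ hinj).mp h)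

end PrimeRing

section FiniteDimensional

variable {k C : Type*} [Field k] [Ring C] [Algebra k C] [Module.Finite k C]

variable (k) in
theorem finrank_span_mul_lt {j y : C} (hj : j ∈ Ring.jacobson C) (hy : y ≠ 0) :
    finrank k ((span C {j * y}).restrictScalars k) <
      finrank k ((span C {y}).restrictScalars k) := by
  have hle : span C {j * y} ≤ Ring.jacobson C • span C {y} :=
    span_le.mpr (Set.singleton_subset_iff.mpr (smul_mem_smul hj (mem_span_singleton_self y)))
  have hlt := (fg_span_singleton (R := C) y).jacobson_smul_lt (by simpa using hy)
  exact finrank_lt_finrank_of_lt ((restrictScalars_lt k).mpr (hle.trans_lt hlt))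

theorem pow_jacobson_subset_zero {n : ℕ} (hn : finrank k C ≤ n) :
    (Ring.jacobson C : Set C) ^ n ⊆ {0} := by
  have key (i : ℕ) : ∀ y ∈ (Ring.jacobson C : Set C) ^ i,
      y ≠ 0 → finrank k ((span C {y}).restrictScalars k) + i ≤ finrank k C := by
    induction i with
    | zero => exact fun y _ _ => Submodule.finrank_le _
    | succ i ih =>
      intro _ hy hjy
      rw [pow_succ'] at hy
      obtain ⟨j, hj, y, hy, rfl⟩ := hy
      beta_reduce at hjy ⊢
      have hy0 : y ≠ 0 := by rintro rfl; simp at hjy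
      have := finrank_span_mul_lt k hj hy0
      have := ih y hy hy0
      omega
  intro y hy
  by_contra hy0
  have hpos : 0 < finrank k ((span C {y}).restrictScalars k) := by
    rw [Nat.pos_iff_ne_zero, Ne, Submodule.finrank_eq_zero, restrictScalars_eq_bot_iff,
      span_singleton_eq_bot]
    exact hy0
  have := key n y hy hy0
  omega

end FiniteDimensional

section BaseChange

variable {R : Type*} [CommRing R]

theorem finrank_baseChange_le_of_surjective {M : Type*} [AddCommGroup M] [Module R M]
    (k : Type*) [Field k] [Algebra R k] {n : ℕ} {f : (Fin n → R) →ₗ[R] M}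
    (hf : Function.Surjective f) : finrank k (k ⊗[R] M) ≤ n :=
  calc finrank k (k ⊗[R] M) ≤ finrank k (k ⊗[R] (Fin n → R)) :=
        LinearMap.finrank_le_finrank_of_surjective (f := f.baseChange k)
          (LinearMap.lTensor_surjective k hf)
    _ = n := by rw [(piScalarRight R k k (Fin n)).finrank_eq, finrank_fin_fun]

theorem pow_jacobson_subset_smul_top {B : Type*} [Ring B] [Algebra R B] [Module.Finite R B]
    (m : Ideal R) [m.IsMaximal] {n : ℕ} (hn : finrank (R ⧸ m) ((R ⧸ m) ⊗[R] B) ≤ n) :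
    (Ring.jacobson B : Set B) ^ n ⊆ (m • ⊤ : Submodule R B) := by
  let := Ideal.Quotient.field m
  let e := quotTensorEquivQuotSMul B m
  let φ : B →ₐ[R] (R ⧸ m) ⊗[R] B := Algebra.TensorProduct.includeRight
  have he (x : B) : e (φ x) = Submodule.Quotient.mk x := quotTensorEquivQuotSMul_mk_one_tmul m x
  have hφ : Function.Surjective φ := fun c => by
    obtain ⟨x, hx⟩ := Submodule.Quotient.mk_surjective _ (e c)
    exact ⟨x, e.injective (by rw [he, hx])⟩
  have : RingHomSurjective (φ : B →+* (R ⧸ m) ⊗[R] B) := ⟨hφ⟩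
  intro x hx
  have hφx : φ x ∈ (Ring.jacobson ((R ⧸ m) ⊗[R] B) : Set _) ^ n := by
    refine Set.pow_subset_pow_left ?_ (Set.image_pow φ _ n ▸ Set.mem_image_of_mem φ hx)
    rintro _ ⟨y, hy, rfl⟩
    exact Ring.le_comap_jacobson (φ : B →+* (R ⧸ m) ⊗[R] B) hy
  rw [SetLike.mem_coe, ← Submodule.Quotient.mk_eq_zero, ← he, pow_jacobson_subset_zero hn hφx,
    map_zero]

end BaseChange

section TorsionFree

variable {R M : Type*} [CommRing R] [IsDomain R] [AddCommGroup M] [Module R M]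
  [Module.Finite R M] [IsTorsionFree R M]

variable (R) in
theorem Module.exists_dual_apply_ne_zero {x : M} (hx : x ≠ 0) : ∃ g : Dual R M, g x ≠ 0 := by
  let K := FractionRing R
  let f := LocalizedModule.mkLinearMap (nonZeroDivisors R) M
  have hfx : f x ≠ 0 := by
    intro h
    obtain ⟨s, hs⟩ := (IsLocalizedModule.eq_zero_iff (nonZeroDivisors R) f).mp h
    exact hx ((smul_eq_zero.mp hs).resolve_left (nonZeroDivisors.coe_ne_zero s))
  obtain ⟨φ, hφ⟩ := Projective.exists_dual_ne_zero K hfx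
  let h : M →ₗ[R] K := φ.restrictScalars R ∘ₗ f
  -- a common denominator `a` of the finitely generated `R`-module `h(M) ⊆ K` makes `a • h` integral
  obtain ⟨a, ha, hint⟩ := FractionalIdeal.isFractional_of_fg (S := nonZeroDivisors R)
    (Module.Finite.fg_top.map h)
  have hint' (y : M) : (a • h) y ∈ LinearMap.range (Algebra.linearMap R K) :=
    hint _ ⟨y, trivial, rfl⟩
  let e := LinearEquiv.ofInjective (Algebra.linearMap R K) (IsFractionRing.injective R K)
  refine ⟨e.symm ∘ₗ (a • h).codRestrict _ hint', ?_⟩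
  rw [LinearMap.comp_apply, LinearEquiv.coe_coe, LinearEquiv.map_ne_zero_iff, Ne,
    ← Subtype.coe_inj, LinearMap.codRestrict_apply, LinearMap.smul_apply, ZeroMemClass.coe_zero,
    smul_eq_zero, not_or]
  exact ⟨nonZeroDivisors.coe_ne_zero ⟨a, ha⟩, hφ⟩

theorem eq_zero_of_forall_mem_smul_top (hR : Ring.jacobson R = ⊥) {x : M}
    (hx : ∀ m : Ideal R, m.IsMaximal → x ∈ m • (⊤ : Submodule R M)) : x = 0 := by
  by_contra hx0
  obtain ⟨g, hg⟩ := exists_dual_apply_ne_zero R hx0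
  have hgx : g x ∈ Ring.jacobson R := by
    rw [Ring.jacobson_eq_sInf_isMaximal, Submodule.mem_sInf]
    intro m hm
    have h1 : g x ∈ (m • ⊤ : Submodule R M).map g := Submodule.mem_map_of_mem (hx m hm)
    rw [Submodule.map_smul'', Submodule.map_top] at h1
    exact Submodule.smul_le.mpr (fun r hr y _ => Ideal.mul_mem_right y m hr) h1
  rw [hR, Submodule.mem_bot] at hgx
  exact hg hgx

end TorsionFree

section Jacobson

variable {R B : Type*} [CommRing R] [Ring B] [Algebra R B]

theorem Ring.jacobson_eq_bot_of_isTorsionFree [IsDomain R] [Module.Finite R B]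
    [IsTorsionFree R B] (hR : Ring.jacobson R = ⊥)
    (hB : ∀ a b : B, (∀ x, a * x * b = 0) → a = 0 ∨ b = 0) : Ring.jacobson B = ⊥ := by
  obtain ⟨n, f, hf⟩ := Module.Finite.exists_fin' R B
  refine Ideal.eq_bot_of_pow_subset_zero hB _ (n := n) fun x hx => ?_
  -- `n` bounds `dim (R/m) ⊗ B` for every maximal `m` at once
  refine eq_zero_of_forall_mem_smul_top hR fun m _ => ?_
  let := Ideal.Quotient.field m
  exact pow_jacobson_subset_smul_top m (finrank_baseChange_le_of_surjective _ hf) hx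

theorem Ring.jacobson_eq_bot_of_isJacobsonRing [IsJacobsonRing R] [Module.Finite R B]
    [Nontrivial B] (hB : ∀ a b : B, (∀ x, a * x * b = 0) → a = 0 ∨ b = 0) :
    Ring.jacobson B = ⊥ := by
  let q := RingHom.ker (algebraMap R B)
  have : q.IsPrime := isPrime_ker_algebraMap hB
  let := (RingHom.kerLift (algebraMap R B)).toAlgebra' fun r x => by
    obtain ⟨r, rfl⟩ := Ideal.Quotient.mk_surjective r
    exact Algebra.commutes r x
  have : IsScalarTower R (R ⧸ q) B := .of_algebraMap_eq fun _ => rfl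
  have : Module.Finite (R ⧸ q) B := .of_restrictScalars_finite R _ _
  have := isTorsionFree_of_injective_algebraMap hB (RingHom.kerLift_injective (algebraMap R B))
  refine jacobson_eq_bot_of_isTorsionFree (R := R ⧸ q) ?_ hB
  rw [← Ideal.jacobson_bot, ← Ideal.jacobson_eq_iff_jacobson_quotient_eq_bot]
  exact isJacobsonRing_iff_prime_eq.mp ‹_› q ‹_›

end Jacobson

theorem stmt5_general {R : Type v} {A : Type u} [CommRing R] [Ring A] [Algebra R A]
    [Module.Finite R A] [IsJacobsonRing R] :
    ∀ P : TwoSidedIdeal A, P.IsPrimeTS →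
      (⊥ : Ideal P.ringCon.Quotient).jacobson = ⊥ := by
  intro P hP
  have : Module.Finite R P.ringCon.Quotient :=
    .of_surjective (P.ringCon.mkₐ R).toLinearMap (P.ringCon.mkₐ_surjective (α := R))
  have := hP.nontrivial
  rw [Ideal.jacobson_bot]
  exact Ring.jacobson_eq_bot_of_isJacobsonRing (R := R) hP.eq_zero_or_eq_zero

/-- Let `R` be a central subring of `A` such that `A` is a finitely generated `R`-module.
If `R` is a Jacobson ring, then `A` is a Jacobson ring: for every prime two-sided ideal `P`
of `A`, the Jacobson radical of the quotient ring `A/P` is zero. -/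
theorem stmt5 {R : Type v} {A : Type u} [CommRing R] [Ring A] [Algebra R A]
    (hinj : Function.Injective (algebraMap R A))
    [Module.Finite R A] [IsJacobsonRing R] :
    ∀ P : TwoSidedIdeal A, P.IsPrimeTS →
      (⊥ : Ideal P.ringCon.Quotient).jacobson = ⊥ :=
  stmt5_general (R := R)
end

section
/- Let R be a commutative ring, A an R-algebra finitely presented as an R-module, and suppose A_p is a local ring for every prime p of R. If M is a finitely presented right A-module, then the set U = { p ∈ Spec R : M_p is a projective A_p-module } is open in Spec R. -/
open TensorProduct

section

variable {R : Type u} {A : Type u} [CommRing R] [Ring A] [Algebra R A]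
variable (M : Type u) [AddCommGroup M] [Module R M] [Module Aᵐᵒᵖ M]
  [SMulCommClass Aᵐᵒᵖ R M] [IsScalarTower R Aᵐᵒᵖ M]
variable (Rp : Type u) [CommRing Rp] [Algebra R Rp]

/-- The action of an element of `Aᵐᵒᵖ` on `M`, as an `R`-linear endomorphism. -/
def opSmulEnd (b : Aᵐᵒᵖ) : M →ₗ[R] M where
  toFun m := b • m
  map_add' := smul_add b
  map_smul' r m := (smul_comm b r m)

/-- The action of `Aᵐᵒᵖ` on the localized (base-changed) module `Rp ⊗[R] M`, acting on the
second tensor factor. -/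
noncomputable def opSmulHom : Aᵐᵒᵖ →+* Module.End R (Rp ⊗[R] M) where
  toFun b := LinearMap.lTensor Rp (opSmulEnd M b)
  map_one' := LinearMap.ext fun z => by
    induction z with
    | zero => simp
    | tmul x m => simp [opSmulEnd]
    | add x y hx hy => simp_all
  map_mul' b b' := LinearMap.ext fun z => by
    induction z with
    | zero => simp
    | tmul x m => simp [opSmulEnd, mul_smul]
    | add x y hx hy => simp_all
  map_zero' := LinearMap.ext fun z => by
    induction z with
    | zero => simp
    | tmul x m => simp [opSmulEnd]
    | add x y hx hy => simp_all
  map_add' b b' := LinearMap.ext fun z => by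
    induction z with
    | zero => simp
    | tmul x m => simp [opSmulEnd, add_smul, TensorProduct.tmul_add]
    | add x y hx hy => simp_all; abel

/-- The right `A`-module structure (i.e. left `Aᵐᵒᵖ`-module structure) on `Rp ⊗[R] M`. -/
noncomputable instance opModule : Module Aᵐᵒᵖ (Rp ⊗[R] M) :=
  Module.compHom _ (opSmulHom (R := R) (A := A) M Rp)

theorem op_smul_tmul (b : Aᵐᵒᵖ) (x : Rp) (m : M) :
    b • (x ⊗ₜ[R] m) = x ⊗ₜ (b • m) := rfl

theorem op_smul_def (b : Aᵐᵒᵖ) (z : Rp ⊗[R] M) :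
    b • z = LinearMap.lTensor Rp (opSmulEnd (R := R) M b) z := rfl

noncomputable instance : IsScalarTower R Aᵐᵒᵖ (Rp ⊗[R] M) := by
  constructor
  intro r b z
  induction z with
  | zero => simp [op_smul_def]
  | tmul x m =>
      rw [op_smul_tmul, op_smul_tmul, smul_assoc, TensorProduct.tmul_smul]
  | add x y hx hy => simp only [smul_add, hx, hy]

noncomputable instance : SMulCommClass Aᵐᵒᵖ Rp (Rp ⊗[R] M) := by
  constructor
  intro b x z
  induction z with
  | zero => simp [op_smul_def]
  | tmul y m =>
      rw [TensorProduct.smul_tmul', op_smul_tmul, op_smul_tmul,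
        TensorProduct.smul_tmul']
  | add z w hz hw => simp only [smul_add, hz, hw]

/-- The module structure on `M_p := Rp ⊗[R] M` over the central localization
`(A_p)ᵐᵒᵖ = Aᵐᵒᵖ ⊗[R] Rp`, making `M_p` a right `A_p`-module. -/
noncomputable instance : Module (Aᵐᵒᵖ ⊗[R] Rp) (Rp ⊗[R] M) :=
  TensorProduct.Algebra.module

end

/-- A (possibly noncommutative) ring `A` is *local* in the sense of the paper if the quotient
`A/J(A)` of `A` by its Jacobson radical is a simple Artinian ring. -/
def IsLocalRingNC (A : Type u) [Ring A] : Prop :=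
  ∃ (Q : Type u) (_ : Ring Q) (f : A →+* Q), Function.Surjective f ∧
    (∀ a : A, f a = 0 ↔ a ∈ (⊥ : Ideal A).jacobson) ∧ IsSimpleRing Q ∧ IsArtinianRing Q

/-!
Fix a presentation `π : Aᵐᵒᵖ^k → M`. Because `M` is finitely presented, `Aᵐᵒᵖ`-linear maps out of
`M` into a localization lift back up to a denominator, so `M_p` is projective (i.e. `π_p` splits)
exactly when `π ∘ t = h • id` for some `Aᵐᵒᵖ`-linear `t : M → Aᵐᵒᵖ^k` and some `h ∉ p`. That
identity survives every localization in which `h` is invertible, so it gives projectivity on the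
whole basic open `D(h)`.
-/

section LocalizedLift

/- `B`-linear versions, for a possibly noncommutative `R`-algebra `B`, of
`Module.Finite.exists_smul_of_comp_eq_of_isLocalizedModule` and
`Module.FinitePresentation.exists_lift_of_isLocalizedModule`. -/

variable {R B : Type*} [CommRing R] [Ring B] [Algebra R B] (S : Submonoid R)
variable {M N N' : Type*} [AddCommGroup M] [Module B M]
  [AddCommGroup N] [Module R N] [Module B N] [IsScalarTower R B N]
  [AddCommGroup N'] [Module R N'] [Module B N'] [IsScalarTower R B N']
  (f : N →ₗ[B] N') [IsLocalizedModule S (f.restrictScalars R)]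
include S f

theorem exists_smul_eq_of_comp_eq_of_isLocalizedModule [Module.Finite B M]
    (g₁ g₂ : M →ₗ[B] N) (h : f ∘ₗ g₁ = f ∘ₗ g₂) : ∃ s : S, s • g₁ = s • g₂ := by
  classical
  have : ∀ x, ∃ s : S, s • g₁ x = s • g₂ x := fun x ↦
    IsLocalizedModule.exists_of_eq (S := S) (f := f.restrictScalars R) (LinearMap.congr_fun h x)
  choose s hs using this
  obtain ⟨σ, hσ⟩ := ‹Module.Finite B M›
  refine ⟨σ.prod s, ?_⟩
  rw [← sub_eq_zero, ← LinearMap.ker_eq_top, ← top_le_iff, ← hσ, Submodule.span_le]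
  intro x hx
  simp only [SetLike.mem_coe, LinearMap.mem_ker, LinearMap.sub_apply, LinearMap.smul_apply,
    sub_eq_zero, ← Finset.prod_erase_mul σ s hx, mul_smul, hs]

theorem exists_lift_of_isLocalizedModule_of_free {n : ℕ} (g : (Fin n → B) →ₗ[B] N') :
    ∃ (h : (Fin n → B) →ₗ[B] N) (s : S), f ∘ₗ h = s • g := by
  obtain ⟨s, hs⟩ := IsLocalizedModule.exist_integer_multiples_of_finite S (f.restrictScalars R)
    fun i ↦ g (Pi.single i 1)
  choose x hx using hs
  refine ⟨Fintype.linearCombination B x, s, ?_⟩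
  ext i
  simpa [Submonoid.smul_def] using hx i

theorem exists_lift_of_isLocalizedModule [Module.FinitePresentation B M] (g : M →ₗ[B] N') :
    ∃ (h : M →ₗ[B] N) (s : S), f ∘ₗ h = s • g := by
  obtain ⟨n, π, hπ⟩ := Module.Finite.exists_fin' B M
  obtain ⟨h₀, s, hh₀⟩ := exists_lift_of_isLocalizedModule_of_free S f (g ∘ₗ π)
  have : Module.Finite B (LinearMap.ker π) := .of_fg (Module.FinitePresentation.fg_ker π hπ)
  obtain ⟨s', hs'⟩ := exists_smul_eq_of_comp_eq_of_isLocalizedModule S f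
    (h₀ ∘ₗ (LinearMap.ker π).subtype) 0 (by
      rw [← LinearMap.comp_assoc, hh₀, LinearMap.smul_comp, LinearMap.comp_assoc,
        LinearMap.comp_ker_subtype, LinearMap.comp_zero, LinearMap.comp_zero, smul_zero])
  have hker : LinearMap.ker π ≤ LinearMap.ker (s' • h₀) := fun x hx ↦
    LinearMap.congr_fun hs' ⟨x, hx⟩ |>.trans (smul_zero _)
  refine ⟨(LinearMap.ker π).liftQ (s' • h₀) hker ∘ₗ
    (π.quotKerEquivOfSurjective hπ).symm.toLinearMap, s' * s, ?_⟩
  ext x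
  obtain ⟨x, rfl⟩ := hπ x
  have hq : (π.quotKerEquivOfSurjective hπ).symm (π x) = (LinearMap.ker π).mkQ x :=
    (LinearEquiv.symm_apply_eq _).mpr rfl
  simp [hq, mul_smul, ← LinearMap.comp_apply f h₀, hh₀]

end LocalizedLift

section TensorLinear

variable {R C D P Q : Type*} [CommRing R] [Semiring C] [Algebra R C] [Semiring D] [Algebra R D]
  [AddCommMonoid P] [Module (C ⊗[R] D) P] [AddCommMonoid Q] [Module (C ⊗[R] D) Q]

def LinearMap.ofMapTmulSMul (f : P →+ Q)
    (hf : ∀ (c : C) (d : D) (z : P), f ((c ⊗ₜ[R] d) • z) = (c ⊗ₜ[R] d) • f z) :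
    P →ₗ[C ⊗[R] D] Q where
  __ := f
  map_smul' x z := by
    induction x with
    | zero => simp
    | tmul c d => exact hf c d z
    | add x y hx hy => simp_all [add_smul]

end TensorLinear

section OpBaseChange

variable (R : Type u) {A : Type u} [CommRing R] [Ring A] [Algebra R A]
  (Rq : Type u) [CommRing Rq] [Algebra R Rq]
variable {X Y : Type u} [AddCommGroup X] [Module R X] [Module Aᵐᵒᵖ X] [SMulCommClass Aᵐᵒᵖ R X]
  [IsScalarTower R Aᵐᵒᵖ X] [AddCommGroup Y] [Module R Y] [Module Aᵐᵒᵖ Y] [SMulCommClass Aᵐᵒᵖ R Y]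
  [IsScalarTower R Aᵐᵒᵖ Y]

theorem tmul_one_smul (b : Aᵐᵒᵖ) (z : Rq ⊗[R] X) : (b ⊗ₜ[R] (1 : Rq)) • z = b • z := by
  rw [TensorProduct.Algebra.smul_def, one_smul]

instance : IsScalarTower Aᵐᵒᵖ (Aᵐᵒᵖ ⊗[R] Rq) (Rq ⊗[R] X) := by
  refine ⟨fun b x z ↦ ?_⟩
  have hb : b • x = (b ⊗ₜ[R] (1 : Rq)) * x := by
    induction x with
    | zero => simp
    | tmul c y => simp [TensorProduct.smul_tmul', Algebra.TensorProduct.tmul_mul_tmul]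
    | add x y hx hy => simp_all [mul_add]
  rw [hb, mul_smul, tmul_one_smul]

theorem lTensor_map_op_smul (g : X →ₗ[Aᵐᵒᵖ] Y) (b : Aᵐᵒᵖ) (z : Rq ⊗[R] X) :
    (g.restrictScalars R).lTensor Rq (b • z) = b • (g.restrictScalars R).lTensor Rq z := by
  induction z with
  | zero => simp only [smul_zero, map_zero]
  | tmul x m => exact congrArg (x ⊗ₜ ·) (g.map_smul b m)
  | add z w hz hw => simp only [smul_add, map_add, hz, hw]

noncomputable def opBaseChange (g : X →ₗ[Aᵐᵒᵖ] Y) :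
    Rq ⊗[R] X →ₗ[Aᵐᵒᵖ ⊗[R] Rq] Rq ⊗[R] Y :=
  LinearMap.ofMapTmulSMul ((g.restrictScalars R).baseChange Rq).toAddMonoidHom fun b y z ↦ by
    rw [TensorProduct.Algebra.smul_def, TensorProduct.Algebra.smul_def]
    simp only [LinearMap.toAddMonoidHom_coe, LinearMap.baseChange_eq_ltensor]
    rw [lTensor_map_op_smul, ← LinearMap.baseChange_eq_ltensor, LinearMap.map_smul]

theorem opBaseChange_surjective {g : X →ₗ[Aᵐᵒᵖ] Y} (hg : Function.Surjective g) :
    Function.Surjective (opBaseChange R Rq g) :=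
  LinearMap.lTensor_surjective Rq (g := g.restrictScalars R) hg

theorem opBaseChange_comp {Z : Type u} [AddCommGroup Z] [Module R Z] [Module Aᵐᵒᵖ Z]
    [SMulCommClass Aᵐᵒᵖ R Z] [IsScalarTower R Aᵐᵒᵖ Z] (g : Y →ₗ[Aᵐᵒᵖ] Z) (g' : X →ₗ[Aᵐᵒᵖ] Y) :
    opBaseChange R Rq (g ∘ₗ g') = opBaseChange R Rq g ∘ₗ opBaseChange R Rq g' := by
  ext z
  induction z with
  | zero => simp only [map_zero]
  | tmul x m => rfl
  | add z w hz hw => simp only [map_add, hz, hw]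

theorem opBaseChange_smul_id_apply (r : R) (z : Rq ⊗[R] X) :
    opBaseChange R Rq (r • LinearMap.id : X →ₗ[Aᵐᵒᵖ] X) z = r • z := by
  induction z with
  | zero => simp only [map_zero, smul_zero]
  | tmul x m => exact TensorProduct.tmul_smul r x m
  | add z w hz hw => simp only [map_add, smul_add, hz, hw]

variable (A X) in
def opTensorMk : X →ₗ[Aᵐᵒᵖ] Rq ⊗[R] X where
  toFun x := 1 ⊗ₜ x
  map_add' := TensorProduct.tmul_add 1
  map_smul' _ _ := rfl

instance isLocalizedModule_opTensorMk (S : Submonoid R) [IsLocalization S Rq] :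
    IsLocalizedModule S ((opTensorMk R A Rq X).restrictScalars R) :=
  (isLocalizedModule_iff_isBaseChange S Rq _).mpr (TensorProduct.isBaseChange R X Rq)

theorem opBaseChange_comp_opTensorMk (g : X →ₗ[Aᵐᵒᵖ] Y) :
    (opBaseChange R Rq g).restrictScalars Aᵐᵒᵖ ∘ₗ opTensorMk R A Rq X =
      opTensorMk R A Rq Y ∘ₗ g :=
  rfl

noncomputable def tensorPiOpEquiv (k : ℕ) :
    Rq ⊗[R] (Fin k → Aᵐᵒᵖ) ≃ₗ[Aᵐᵒᵖ ⊗[R] Rq] (Fin k → Aᵐᵒᵖ ⊗[R] Rq) :=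
  let e := (TensorProduct.piRight R R Rq fun _ : Fin k ↦ Aᵐᵒᵖ).trans
    (LinearEquiv.piCongrRight fun _ ↦ TensorProduct.comm R Rq Aᵐᵒᵖ)
  { LinearMap.ofMapTmulSMul e.toLinearMap.toAddMonoidHom fun b y z ↦ by
      induction z with
      | zero => simp only [smul_zero, map_zero]
      | tmul x v =>
        funext i
        simp [e, TensorProduct.Algebra.smul_def, TensorProduct.smul_tmul', op_smul_tmul,
          Algebra.TensorProduct.tmul_mul_tmul]
      | add z w hz hw => simp only [smul_add, map_add, hz, hw],
    e with }

theorem projective_tensor_pi (k : ℕ) :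
    Module.Projective (Aᵐᵒᵖ ⊗[R] Rq) (Rq ⊗[R] (Fin k → Aᵐᵒᵖ)) :=
  .of_equiv (tensorPiOpEquiv R Rq k).symm

end OpBaseChange

section Spreading

variable {R A : Type u} [CommRing R] [Ring A] [Algebra R A] (Rq : Type u) [CommRing Rq]
  [Algebra R Rq]
variable {X : Type u} [AddCommGroup X] [Module R X] [Module Aᵐᵒᵖ X] [SMulCommClass Aᵐᵒᵖ R X]
  [IsScalarTower R Aᵐᵒᵖ X] {k : ℕ}

theorem projective_tensor_of_comp_eq_smul_id {π : (Fin k → Aᵐᵒᵖ) →ₗ[Aᵐᵒᵖ] X}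
    {t : X →ₗ[Aᵐᵒᵖ] (Fin k → Aᵐᵒᵖ)} {h : R} (hπt : π ∘ₗ t = h • LinearMap.id)
    (hh : IsUnit (algebraMap R Rq h)) :
    Module.Projective (Aᵐᵒᵖ ⊗[R] Rq) (Rq ⊗[R] X) := by
  have := projective_tensor_pi (A := A) R Rq k
  have hbij : Function.Bijective (opBaseChange R Rq π ∘ₗ opBaseChange R Rq t) := by
    rw [← opBaseChange_comp, hπt]
    convert MulAction.bijective hh.unit using 1
    ext z
    rw [opBaseChange_smul_id_apply, Units.smul_def, IsUnit.unit_spec, algebraMap_smul]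
  let e := LinearEquiv.ofBijective _ hbij
  refine .of_split (opBaseChange R Rq t ∘ₗ e.symm.toLinearMap) (opBaseChange R Rq π) ?_
  ext z
  exact e.apply_symm_apply z

theorem exists_comp_eq_smul_id_of_projective (S : Submonoid R) [IsLocalization S Rq]
    [Module.FinitePresentation Aᵐᵒᵖ X] {π : (Fin k → Aᵐᵒᵖ) →ₗ[Aᵐᵒᵖ] X}
    (hπ : Function.Surjective π) [Module.Projective (Aᵐᵒᵖ ⊗[R] Rq) (Rq ⊗[R] X)] :
    ∃ (t : X →ₗ[Aᵐᵒᵖ] (Fin k → Aᵐᵒᵖ)) (h : R), h ∈ S ∧ π ∘ₗ t = h • LinearMap.id := by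
  set mkX := opTensorMk R A Rq X
  set πq := opBaseChange R Rq π
  obtain ⟨σ, hσ⟩ :=
    Module.projective_lifting_property πq LinearMap.id (opBaseChange_surjective R Rq hπ)
  obtain ⟨t, c, htc⟩ := exists_lift_of_isLocalizedModule S (opTensorMk R A Rq (Fin k → Aᵐᵒᵖ))
    (σ.restrictScalars Aᵐᵒᵖ ∘ₗ mkX)
  have hmk : mkX ∘ₗ (π ∘ₗ t) = mkX ∘ₗ (c • LinearMap.id) := calc
    mkX ∘ₗ (π ∘ₗ t) = πq.restrictScalars Aᵐᵒᵖ ∘ₗ opTensorMk R A Rq _ ∘ₗ t := by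
      rw [← LinearMap.comp_assoc, ← opBaseChange_comp_opTensorMk, LinearMap.comp_assoc]
    _ = c • (πq ∘ₗ σ).restrictScalars Aᵐᵒᵖ ∘ₗ mkX := by
      rw [htc, LinearMap.comp_smul]; rfl
    _ = mkX ∘ₗ (c • LinearMap.id) := by
      rw [hσ, LinearMap.comp_smul]; rfl
  obtain ⟨d, hd⟩ := exists_smul_eq_of_comp_eq_of_isLocalizedModule S mkX _ _ hmk
  refine ⟨d • t, d * c, mul_mem d.2 c.2, ?_⟩
  rw [LinearMap.comp_smul, hd, smul_smul]
  rfl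

end Spreading

theorem stmt13_general {R : Type u} {A : Type u} [CommRing R] [Ring A] [Algebra R A]
    (M : Type u) [AddCommGroup M] [Module R M] [Module Aᵐᵒᵖ M]
    [SMulCommClass Aᵐᵒᵖ R M] [IsScalarTower R Aᵐᵒᵖ M]
    [Module.FinitePresentation Aᵐᵒᵖ M] :
    IsOpen { p : PrimeSpectrum R |
      Module.Projective (Aᵐᵒᵖ ⊗[R] Localization.AtPrime p.asIdeal)
        (Localization.AtPrime p.asIdeal ⊗[R] M) } := by
  obtain ⟨k, π, hπ⟩ := Module.Finite.exists_fin' Aᵐᵒᵖ M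
  refine isOpen_iff_forall_mem_open.mpr fun p (hp : Module.Projective _ _) ↦ ?_
  obtain ⟨t, h, hh, hπt⟩ :=
    exists_comp_eq_smul_id_of_projective (Localization.AtPrime p.asIdeal) p.asIdeal.primeCompl hπ
  refine ⟨PrimeSpectrum.basicOpen h, fun q hq ↦ ?_, (PrimeSpectrum.basicOpen h).isOpen, hh⟩
  exact projective_tensor_of_comp_eq_smul_id _ hπt
    (IsLocalization.map_units _ (⟨h, hq⟩ : q.asIdeal.primeCompl))

/-- Let `R` be a commutative ring and `A` an `R`-algebra which is finitely presented as an
`R`-module, such that the central localization `A_p` is a local ring for every prime `p` of `R`.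
If `M` is a finitely presented right `A`-module, then the set of primes `p` of `R` such that
`M_p` is a projective (right) `A_p`-module is open in `Spec R`. -/
theorem stmt13 {R : Type u} {A : Type u} [CommRing R] [Ring A] [Algebra R A]
    [Module.FinitePresentation R A]
    (hloc : ∀ (p : Ideal R) [p.IsPrime],
      IsLocalRingNC (A ⊗[R] Localization.AtPrime p))
    (M : Type u) [AddCommGroup M] [Module R M] [Module Aᵐᵒᵖ M]
    [SMulCommClass Aᵐᵒᵖ R M] [IsScalarTower R Aᵐᵒᵖ M]
    [Module.FinitePresentation Aᵐᵒᵖ M] :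
    IsOpen { p : PrimeSpectrum R |
      Module.Projective (Aᵐᵒᵖ ⊗[R] Localization.AtPrime p.asIdeal)
        (Localization.AtPrime p.asIdeal ⊗[R] M) } :=
  stmt13_general M
end

section
/- Let R be a commutative ring and M a finitely presented R-module whose support Supp(M) is an open (hence clopen) subset of Spec R. Then there exists an idempotent e ∈ R with Supp(M) = D(e) (the basic open set of primes not containing e), and M·(1−e) = 0. -/
/-!
Since `M` is finite, `Supp M = V(Ann M)` is closed, so a clopen support is `D(e)` for an
idempotent `e`. Then `1 - e` vanishes on `V(Ann M)`, hence lies in the radical of `Ann M`,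
and an idempotent in the radical of an ideal lies in the ideal itself.
-/

open PrimeSpectrum

theorem IsIdempotentElem.mem_of_mem_radical {R : Type*} [CommSemiring R] {I : Ideal R} {e : R}
    (he : IsIdempotentElem e) (h : e ∈ I.radical) : e ∈ I := by
  obtain ⟨n, hn⟩ := h
  rcases n with _ | n
  · rw [pow_zero] at hn
    simpa using I.mul_mem_left e hn
  · rwa [he.pow_succ_eq n] at hn

theorem IsIdempotentElem.one_sub_mem_of_zeroLocus_subset_basicOpen {R : Type*} [CommRing R]
    {I : Ideal R} {e : R} (he : IsIdempotentElem e)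
    (h : zeroLocus (I : Set R) ⊆ basicOpen e) : 1 - e ∈ I := by
  rw [basicOpen_eq_zeroLocus_of_isIdempotentElem e he, ← zeroLocus_span {1 - e},
    zeroLocus_subset_zeroLocus_iff, Ideal.span_singleton_le_iff_mem] at h
  exact he.one_sub.mem_of_mem_radical h

theorem Module.one_sub_smul_eq_zero_of_support_subset_basicOpen {R M : Type*} [CommRing R]
    [AddCommGroup M] [Module R M] [Module.Finite R M] {e : R} (he : IsIdempotentElem e)
    (h : Module.support R M ⊆ basicOpen e) (m : M) : (1 - e) • m = 0 := by
  rw [Module.support_eq_zeroLocus] at h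
  exact Module.mem_annihilator.mp (he.one_sub_mem_of_zeroLocus_subset_basicOpen h) m

/-- Let `R` be a commutative ring and `M` a finitely presented `R`-module whose support is an
open subset of `Spec R`. Then there is an idempotent `e ∈ R` with `Supp(M) = D(e)` and
`M·(1−e) = 0`. -/
theorem stmt14 {R : Type u} {M : Type v} [CommRing R] [AddCommGroup M] [Module R M]
    [Module.FinitePresentation R M]
    (hopen : IsOpen (Module.support R M)) :
    ∃ e : R, IsIdempotentElem e ∧
      Module.support R M = ↑(PrimeSpectrum.basicOpen e) ∧
      ∀ m : M, (1 - e) • m = 0 := by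
  obtain ⟨e, he, hsupp⟩ :=
    exists_idempotent_basicOpen_eq_of_isClopen ⟨Module.isClosed_support, hopen⟩
  exact ⟨e, he, hsupp,
    Module.one_sub_smul_eq_zero_of_support_subset_basicOpen he hsupp.subset⟩
end

section
/- Let R be a commutative ring and n : Spec R → ℤ a continuous function (ℤ discrete). Then there exist finitely many integers n_1 > ⋯ > n_s and a complete set of orthogonal idempotents e_1, …, e_s in R (i.e., e_i e_j = 0 for i ≠ j and e_1 + ⋯ + e_s = 1) such that n^{-1}(n_i) = D(e_i) for each i and n^{-1}(m) = ∅ for m ∉ {n_1, …, n_s}. -/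
/-!
Since `Spec R` is quasi-compact and `ℤ` is discrete, `n` takes only finitely many values, and each
fiber of `n` is clopen, hence of the form `D(e)` for an idempotent `e`. The fibers partition
`Spec R`, so these idempotents are orthogonal (`D(e e') = D(e) ∩ D(e')` is empty, and nilpotent
idempotents vanish) and their sum `f` is an idempotent with `D(f) = Spec R`, forcing `f = 1`.
-/

open PrimeSpectrum TopologicalSpace

theorem Set.Finite.exists_strictAnti_fin_range_eq {α : Type*} [LinearOrder α] {s : Set α}
    (hs : s.Finite) : ∃ (m : ℕ) (k : Fin m → α), StrictAnti k ∧ Set.range k = s :=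
  ⟨_, hs.toFinset.orderEmbOfFin rfl ∘ Fin.rev,
    (hs.toFinset.orderEmbOfFin rfl).strictMono.comp_strictAnti Fin.rev_strictAnti, by
      rw [Fin.rev_surjective.range_comp, Finset.range_orderEmbOfFin, hs.coe_toFinset]⟩

section

variable {R : Type*} [CommRing R]

theorem IsIdempotentElem.eq_zero_of_basicOpen_eq_bot {e : R} (he : IsIdempotentElem e)
    (h : basicOpen e = ⊥) : e = 0 :=
  he.eq_zero_of_isNilpotent ((basicOpen_eq_bot_iff e).mp h)

theorem IsIdempotentElem.eq_one_of_basicOpen_eq_top {e : R} (he : IsIdempotentElem e)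
    (h : basicOpen e = ⊤) : e = 1 := by
  have hcompl : basicOpen (1 - e) = ⊥ := by
    have : basicOpen (e * (1 - e)) = ⊥ := by rw [he.mul_one_sub_self, basicOpen_zero]
    rwa [basicOpen_mul, h, top_inf_eq] at this
  exact (sub_eq_zero.mp (he.one_sub.eq_zero_of_basicOpen_eq_bot hcompl)).symm

namespace PrimeSpectrum

theorem completeOrthogonalIdempotents_of_basicOpen {ι : Type*} [Fintype ι] {e : ι → R}
    (he : ∀ i, IsIdempotentElem (e i))
    (hdisj : Pairwise fun i j => Disjoint (basicOpen (e i)) (basicOpen (e j)))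
    (hcover : ⨆ i, basicOpen (e i) = ⊤) : CompleteOrthogonalIdempotents e := by
  have hortho : OrthogonalIdempotents e := by
    refine ⟨he, fun i j hij => ((he i).mul (he j)).eq_zero_of_basicOpen_eq_bot ?_⟩
    rw [basicOpen_mul]
    exact (hdisj hij).eq_bot
  refine ⟨hortho, hortho.isIdempotentElem_sum.eq_one_of_basicOpen_eq_top ?_⟩
  refine top_unique (hcover ▸ iSup_le fun i => ?_)
  calc basicOpen (e i) = basicOpen (e i * ∑ j, e j) := by
        rw [hortho.mul_sum_of_mem (Finset.mem_univ i)]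
    _ ≤ basicOpen (∑ j, e j) := basicOpen_mul_le_right _ _

end PrimeSpectrum

end

/-- Let `R` be a commutative ring and `n : Spec R → ℤ` a continuous function (`ℤ` discrete).
Then there are finitely many integers `n₁ > ⋯ > nₛ` and a complete set of orthogonal
idempotents `e₁, …, eₛ` of `R` such that `n⁻¹(nᵢ) = D(eᵢ)` for each `i`, and `n⁻¹(m) = ∅`
for `m ∉ {n₁, …, nₛ}`. -/
theorem stmt16 {R : Type u} [CommRing R] (n : PrimeSpectrum R → ℤ) (hn : Continuous n) :
    ∃ (s : ℕ) (k : Fin s → ℤ) (e : Fin s → R), StrictAnti k ∧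
      (∀ i, IsIdempotentElem (e i)) ∧
      (∀ i j, i ≠ j → e i * e j = 0) ∧
      (∑ i, e i) = 1 ∧
      (∀ i, n ⁻¹' {k i} = ↑(PrimeSpectrum.basicOpen (e i))) ∧
      (∀ m : ℤ, m ∉ Set.range k → n ⁻¹' {m} = ∅) := by
  obtain ⟨s, k, hk, hrange⟩ :=
    (isCompact_range hn).finite_of_discrete.exists_strictAnti_fin_range_eq
  choose e he hfiber using fun i =>
    PrimeSpectrum.isClopen_iff.mp ((isClopen_discrete {k i}).preimage hn)
  have hdisj : Pairwise fun i j => Disjoint (basicOpen (e i)) (basicOpen (e j)) := by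
    intro i j hij
    rw [← Opens.coe_disjoint, ← hfiber, ← hfiber]
    exact (Set.disjoint_singleton.mpr (hk.injective.ne hij)).preimage n
  have hcover : ⨆ i, basicOpen (e i) = ⊤ := by
    refine Opens.ext (Set.eq_univ_of_forall fun p => ?_)
    obtain ⟨i, hi⟩ : n p ∈ Set.range k := hrange ▸ Set.mem_range_self p
    simpa [← hfiber] using ⟨i, hi.symm⟩
  have hcoi := completeOrthogonalIdempotents_of_basicOpen he hdisj hcover
  refine ⟨s, k, e, hk, he, fun i j hij => hcoi.ortho hij, hcoi.complete, hfiber, ?_⟩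
  intro m hm
  refine Set.eq_empty_of_forall_notMem fun p hp => hm ?_
  rw [hrange, ← Set.mem_singleton_iff.mp hp]
  exact Set.mem_range_self p
end

section
/- Let A be a ring whose center contains a subring R such that A is module-finite over R, and suppose P ↦ P ∩ R gives a homeomorphism Spec A → Spec R. Then for every prime ideal p of R, the localization A_p is a local ring (A_p modulo its Jacobson radical is simple Artinian). -/
theorem TwoSidedIdeal.contract_isPrime {R : Type v} {A : Type u} [CommRing R] [Ring A]
    [Algebra R A] {P : TwoSidedIdeal A} (hP : P.IsPrimeTS) :
    (P.contract (R := R)).IsPrime := by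
  constructor
  · intro h
    have h1 : (1 : R) ∈ P.contract (R := R) := (Ideal.eq_top_iff_one _).1 h
    have h2 : (1 : A) ∈ P := by simpa [TwoSidedIdeal.contract] using h1
    exact hP.1 (P.one_mem_iff.1 h2)
  · intro x y hxy
    have hxy' : algebraMap R A x * algebraMap R A y ∈ P := by
      rw [← map_mul]
      exact hxy
    rcases hP.2 (algebraMap R A x) (algebraMap R A y) (fun z => by
      rw [show algebraMap R A x * z * algebraMap R A y
            = z * (algebraMap R A x * algebraMap R A y) by
          rw [Algebra.commutes x z, mul_assoc]]
      exact P.mul_mem_left _ _ hxy') with h | h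
    · exact Or.inl h
    · exact Or.inr h

/-- The prime spectrum of a (possibly noncommutative) ring: the set of prime two-sided
ideals. -/
def PrimeSpectrumNC (A : Type u) [Ring A] : Type u :=
  {P : TwoSidedIdeal A // P.IsPrimeTS}

/-- The closed set `V(I)` of prime two-sided ideals containing a given two-sided ideal `I`. -/
def zeroLocusNC {A : Type u} [Ring A] (I : TwoSidedIdeal A) : Set (PrimeSpectrumNC A) :=
  {P | I ≤ P.1}

/-- The Zariski topology on the noncommutative prime spectrum, generated by the complements
of the sets `V(I)`. -/
instance {A : Type u} [Ring A] : TopologicalSpace (PrimeSpectrumNC A) :=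
  TopologicalSpace.generateFrom {s | ∃ I : TwoSidedIdeal A, s = (zeroLocusNC I)ᶜ}

/-- The contraction map `π : Spec A → Spec R`. -/
def piSpec (R : Type v) {A : Type u} [CommRing R] [Ring A] [Algebra R A] :
    PrimeSpectrumNC A → PrimeSpectrum R :=
  fun P => ⟨P.1.contract, TwoSidedIdeal.contract_isPrime P.2⟩

/-! Write `S = R_p` and `B = R_p ⊗[R] A`, a finite `S`-algebra, nonzero because some prime of `A`
lies over `p`. By Nakayama the maximal ideal of `S` kills every simple `B`-module, so the
annihilator of `B ⧸ L`, for `L` a maximal left ideal, is a prime of `B` lying over the closed point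
of `Spec S`. Pulling back along `A → B` embeds these primes into the primes of `A` lying over `p`,
of which there is only one since `π` is injective. So all the annihilators coincide; this common
ideal is then `J(B)`, and every proper two-sided ideal of `B` lies inside it, so `B ⧸ J(B)` is
simple. It is Artinian because it is finite over the residue field of `S`. -/

section Annihilator

variable {B : Type*} [Ring B]

instance Ideal.isSimpleModule_quotient (L : Ideal B) [hL : L.IsMaximal] :
    IsSimpleModule B (B ⧸ L) :=
  isSimpleModule_iff_isCoatom.2 hL.out

theorem Module.isPrimeTS_annihilator (N : Type*) [AddCommGroup N] [Module B N]
    [IsSimpleModule B N] : (Module.annihilator B N).toTwoSided.IsPrimeTS := by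
  refine ⟨fun h => ?_, fun a b hab => ?_⟩
  · have := IsSimpleModule.nontrivial B N
    obtain ⟨n, hn⟩ := exists_ne (0 : N)
    have h1 : (1 : B) ∈ Module.annihilator B N := by
      rw [← Ideal.mem_toTwoSided, h]; trivial
    exact hn (by simpa using Module.mem_annihilator.1 h1 n)
  · simp only [Ideal.mem_toTwoSided, Module.mem_annihilator] at hab ⊢
    by_contra! h
    obtain ⟨⟨m, ha⟩, n, hb⟩ := h
    obtain ⟨c, rfl⟩ : ∃ c : B, c • b • n = m :=
      Submodule.mem_span_singleton.1 (IsSimpleModule.span_singleton_eq_top B hb ▸ trivial)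
    exact ha (by simpa [mul_smul] using hab c n)

theorem Ring.jacobson_le_annihilator (N : Type*) [AddCommGroup N] [Module B N]
    [IsSimpleModule B N] : Ring.jacobson B ≤ Module.annihilator B N := fun r hr =>
  Module.mem_annihilator.2 fun n => by
    simpa [IsSimpleModule.jacobson_eq_bot] using
      Ring.jacobson_smul_top_le B N (Submodule.smul_mem_smul hr trivial)

theorem Ideal.annihilator_quotient_le (L : Ideal B) : Module.annihilator B (B ⧸ L) ≤ L :=
  fun r hr => by
    have h := Module.mem_annihilator.1 hr (Submodule.Quotient.mk 1)
    rwa [← Submodule.Quotient.mk_smul, Submodule.Quotient.mk_eq_zero, smul_eq_mul, mul_one] at h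

theorem TwoSidedIdeal.le_annihilator_quotient {I : TwoSidedIdeal B} {L : Ideal B}
    (h : I.asIdeal ≤ L) : I.asIdeal ≤ Module.annihilator B (B ⧸ L) := fun r hr =>
  Module.mem_annihilator.2 fun x => by
    obtain ⟨x, rfl⟩ := Submodule.Quotient.mk_surjective L x
    rw [← Submodule.Quotient.mk_smul, Submodule.Quotient.mk_eq_zero]
    exact h (I.mul_mem_right _ _ hr)

theorem isSimpleRing_quotient_jacobson [Nontrivial B]
    (h : ∀ L L' : Ideal B, L.IsMaximal → L'.IsMaximal →
      Module.annihilator B (B ⧸ L) = Module.annihilator B (B ⧸ L')) :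
    IsSimpleRing (B ⧸ Ring.jacobson B) := by
  have : Nontrivial (B ⧸ Ring.jacobson B) :=
    Ideal.Quotient.nontrivial_iff.2 (Ring.jacobson_lt_top B).ne
  refine .of_eq_bot_or_eq_top fun I => or_iff_not_imp_right.2 fun hI => ?_
  let I' := I.comap (Ideal.Quotient.mk (Ring.jacobson B))
  have hI' : I'.asIdeal ≠ ⊤ := fun htop => hI <| I.one_mem_iff.1 <| by
    simpa [I', TwoSidedIdeal.mem_comap] using (htop ▸ trivial : (1 : B) ∈ I'.asIdeal)
  obtain ⟨L, hL, hI'L⟩ := Ideal.exists_le_maximal _ hI'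
  have hann : Module.annihilator B (B ⧸ L) ≤ Ring.jacobson B := by
    rw [Ring.jacobson_eq_sInf_isMaximal]
    exact le_sInf fun L' hL' => h L L' hL hL' ▸ Ideal.annihilator_quotient_le L'
  refine eq_bot_iff.2 fun x hx => ?_
  obtain ⟨b, rfl⟩ := Ideal.Quotient.mk_surjective x
  rw [TwoSidedIdeal.mem_bot, Ideal.Quotient.eq_zero_iff_mem]
  exact hann (TwoSidedIdeal.le_annihilator_quotient hI'L ((TwoSidedIdeal.mem_comap _).2 hx))

end Annihilator

theorem IsLocalRingNC.of_quotient_jacobson {B : Type*} [Ring B]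
    [IsSimpleRing (B ⧸ Ring.jacobson B)] [IsArtinianRing (B ⧸ Ring.jacobson B)] :
    IsLocalRingNC B :=
  ⟨B ⧸ Ring.jacobson B, inferInstance, Ideal.Quotient.mk _, Ideal.Quotient.mk_surjective,
    fun a => by rw [Ideal.jacobson_bot, Ideal.Quotient.eq_zero_iff_mem], ‹_›, ‹_›⟩

theorem IsLocalRingNC.of_ringEquiv {B B' : Type u} [Ring B] [Ring B'] (e : B ≃+* B')
    (h : IsLocalRingNC B) : IsLocalRingNC B' := by
  obtain ⟨Q, _, f, hf, hker, hsimple, hart⟩ := h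
  refine ⟨Q, inferInstance, f.comp e.symm.toRingHom, hf.comp e.symm.surjective, fun a => ?_,
    hsimple, hart⟩
  rw [RingHom.comp_apply, hker, ← Ideal.mem_comap,
    Ideal.comap_jacobson_of_surjective e.symm.surjective,
    Ideal.comap_bot_of_injective e.symm.toRingHom e.symm.injective]

section FiniteOverLocal

open IsLocalRing

variable {S B : Type*} [CommRing S] [IsLocalRing S] [Ring B] [Algebra S B]

theorem IsSimpleModule.maximalIdeal_smul_eq_zero (N : Type*) [AddCommGroup N] [Module B N]
    [Module S N] [IsScalarTower S B N] [Module.Finite S N] [IsSimpleModule B N]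
    {s : S} (hs : s ∈ maximalIdeal S) (n : N) : s • n = 0 := by
  let N₀ : Submodule S N := maximalIdeal S • ⊤
  let N₁ : Submodule B N :=
    { N₀ with
      smul_mem' := fun b n hn => by
        have h := Submodule.mem_map_of_mem (f := DistribSMul.toLinearMap S N b) hn
        rw [Submodule.map_smul''] at h
        exact Submodule.smul_mono le_rfl le_top h }
  rcases eq_bot_or_eq_top N₁ with h | h
  · have hn : s • n ∈ N₀ := Submodule.smul_mem_smul hs trivial
    have hn₁ : s • n ∈ N₁ := hn
    rwa [h, Submodule.mem_bot] at hn₁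
  · have := IsSimpleModule.nontrivial B N
    have hle : (⊤ : Submodule S N) ≤ maximalIdeal S • ⊤ := fun x _ => (h ▸ trivial : x ∈ N₁)
    exact absurd (Submodule.eq_bot_of_le_smul_of_le_jacobson_bot _ _ Module.Finite.fg_top hle
      (maximalIdeal_le_jacobson ⊥)) top_ne_bot

variable [Module.Finite S B]

theorem algebraMap_mem_jacobson {s : S} (hs : s ∈ maximalIdeal S) :
    algebraMap S B s ∈ Ring.jacobson B := by
  rw [Ring.jacobson_eq_sInf_isMaximal]
  refine Submodule.mem_sInf.2 fun L (hL : Ideal.IsMaximal L) => ?_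
  have h := IsSimpleModule.maximalIdeal_smul_eq_zero (B := B) (B ⧸ L) hs (Submodule.Quotient.mk 1)
  rwa [← Submodule.Quotient.mk_smul, Submodule.Quotient.mk_eq_zero, Algebra.smul_def,
    mul_one] at h

def PrimeSpectrumNC.annihilatorQuotient (L : Ideal B) [L.IsMaximal] : PrimeSpectrumNC B :=
  ⟨_, Module.isPrimeTS_annihilator (B ⧸ L)⟩

theorem piSpec_annihilatorQuotient (L : Ideal B) [L.IsMaximal] :
    piSpec S (PrimeSpectrumNC.annihilatorQuotient L) = closedPoint S :=
  PrimeSpectrum.ext <| le_antisymm (le_maximalIdeal (piSpec S _).isPrime.ne_top)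
    fun s hs => by
      simpa [piSpec, PrimeSpectrumNC.annihilatorQuotient, TwoSidedIdeal.contract] using
        Ring.jacobson_le_annihilator (B ⧸ L) (algebraMap_mem_jacobson (B := B) hs)

end FiniteOverLocal

open IsLocalRing in
theorem isArtinianRing_quotient_jacobson (S : Type*) {B : Type*} [CommRing S] [IsLocalRing S]
    [Ring B] [Algebra S B] [Module.Finite S B] : IsArtinianRing (B ⧸ Ring.jacobson B) := by
  let := Ideal.Quotient.algebraQuotientOfLEComap (A := B) (P := Ring.jacobson B)
    fun _ hs => algebraMap_mem_jacobson (S := S) (B := B) hs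
  have : IsScalarTower S (S ⧸ maximalIdeal S) (B ⧸ Ring.jacobson B) :=
    .of_algebraMap_eq fun _ => rfl
  have : Module.Finite (S ⧸ maximalIdeal S) (B ⧸ Ring.jacobson B) :=
    .of_restrictScalars_finite S _ _
  have : IsArtinianRing (S ⧸ maximalIdeal S) :=
    let := Ideal.Quotient.field (maximalIdeal S); inferInstance
  exact .of_finite (S ⧸ maximalIdeal S) _

open IsLocalRing in
theorem isLocalRingNC_of_subsingleton_fiber (S : Type*) {B : Type*} [CommRing S] [IsLocalRing S]
    [Ring B] [Nontrivial B] [Algebra S B] [Module.Finite S B]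
    (h : (piSpec S (A := B) ⁻¹' {closedPoint S}).Subsingleton) : IsLocalRingNC B := by
  have : IsSimpleRing (B ⧸ Ring.jacobson B) := isSimpleRing_quotient_jacobson fun L L' _ _ => by
    simpa [PrimeSpectrumNC.annihilatorQuotient] using congrArg (fun P => P.1.asIdeal) <|
      h (piSpec_annihilatorQuotient (S := S) L) (piSpec_annihilatorQuotient L')
  have := isArtinianRing_quotient_jacobson S (B := B)
  exact .of_quotient_jacobson

namespace TwoSidedIdeal

variable {R A B : Type*} [CommRing R] [Ring A] [Algebra R A] [Ring B] [Algebra R B]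

theorem contract_comap (g : A →ₐ[R] B) (P : TwoSidedIdeal B) :
    (P.comap g).contract (R := R) = P.contract := by
  ext r
  simp [contract, mem_comap]

theorem comap_contract (S : Type*) [CommRing S] [Algebra R S] [Algebra S B]
    [IsScalarTower R S B] (P : TwoSidedIdeal B) :
    (P.contract (R := S)).comap (algebraMap R S) = P.contract (R := R) := by
  ext r
  simp [contract, IsScalarTower.algebraMap_apply R S B]

theorem mem_of_smul_mem_of_isLocalizedModule {M : Submonoid R} (f : A →ₗ[R] B)
    [IsLocalizedModule M f] (P : TwoSidedIdeal B) {s : R} (hs : s ∈ M) {x : B}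
    (h : s • x ∈ P) : x ∈ P := by
  obtain ⟨y, hy⟩ := ((Module.End.isUnit_iff _).1 (IsLocalizedModule.map_units f ⟨s, hs⟩)).2 1
  have hys : y * algebraMap R B s = 1 := by
    rw [← Algebra.commutes, ← Algebra.smul_def]
    exact hy
  have hyx := P.mul_mem_left y _ h
  rwa [Algebra.smul_def, ← mul_assoc, hys, one_mul] at hyx

theorem comap_injective_of_isLocalizedModule (M : Submonoid R) (g : A →ₐ[R] B)
    [IsLocalizedModule M g.toLinearMap] : Function.Injective (comap g) := by
  suffices h : ∀ P P' : TwoSidedIdeal B, P.comap g ≤ P'.comap g → P ≤ P' from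
    fun P P' e => le_antisymm (h _ _ e.le) (h _ _ e.ge)
  intro P P' h x hx
  obtain ⟨⟨a, s⟩, hsx⟩ := IsLocalizedModule.surj M g.toLinearMap x
  replace hsx : algebraMap R B s * x = g a := by rw [← Algebra.smul_def]; exact hsx
  have ha : g a ∈ P := hsx ▸ P.mul_mem_left _ _ hx
  refine mem_of_smul_mem_of_isLocalizedModule g.toLinearMap P' s.2 ?_
  rw [Algebra.smul_def, hsx]
  exact (mem_comap g).1 (h ((mem_comap g).2 ha))

theorem IsPrimeTS.comap_of_isLocalizedModule (M : Submonoid R) (g : A →ₐ[R] B)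
    [IsLocalizedModule M g.toLinearMap] {P : TwoSidedIdeal B} (hP : P.IsPrimeTS) :
    (P.comap g).IsPrimeTS := by
  refine ⟨fun h => hP.1 (P.one_mem_iff.1 ?_), fun a b hab => ?_⟩
  · simpa [mem_comap] using (h ▸ trivial : (1 : A) ∈ P.comap g)
  · simp only [mem_comap] at hab ⊢
    refine hP.2 _ _ fun z => ?_
    obtain ⟨⟨c, s⟩, hsz⟩ := IsLocalizedModule.surj M g.toLinearMap z
    replace hsz : (s : R) • z = g c := hsz
    refine mem_of_smul_mem_of_isLocalizedModule g.toLinearMap P s.2 ?_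
    have e : (s : R) • (g a * z * g b) = g (a * c * b) := by
      rw [map_mul, map_mul, ← hsz, ← smul_mul_assoc, mul_smul_comm]
    rw [e]
    exact hab c

end TwoSidedIdeal

theorem nontrivial_of_isLocalizedModule {R A B : Type*} [CommRing R] [Ring A] [Algebra R A]
    [AddCommGroup B] [Module R B] (M : Submonoid R) (f : A →ₗ[R] B) [IsLocalizedModule M f]
    (h : ∀ s ∈ M, algebraMap R A s ≠ 0) : Nontrivial B := by
  by_contra hB
  rw [not_nontrivial_iff_subsingleton] at hB
  obtain ⟨c, hc⟩ := IsLocalizedModule.exists_of_eq (S := M) (f := f) (x₁ := 1) (x₂ := 0)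
    (Subsingleton.elim _ _)
  exact h c c.2 (by simpa [Submonoid.smul_def, Algebra.smul_def] using hc)

open IsLocalRing in
theorem subsingleton_fiber_closedPoint_of_isLocalizedModule {R A B : Type*} [CommRing R]
    [Ring A] [Algebra R A] [Ring B] [Algebra R B] {p : Ideal R} [p.IsPrime]
    [Algebra (Localization.AtPrime p) B] [IsScalarTower R (Localization.AtPrime p) B]
    (g : A →ₐ[R] B) [IsLocalizedModule p.primeCompl g.toLinearMap]
    (h : (piSpec R (A := A) ⁻¹' {⟨p, inferInstance⟩}).Subsingleton) :
    (piSpec (Localization.AtPrime p) (A := B) ⁻¹' {closedPoint _}).Subsingleton := by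
  let comapSpec : PrimeSpectrumNC B → PrimeSpectrumNC A :=
    fun P => ⟨P.1.comap g, P.2.comap_of_isLocalizedModule p.primeCompl g⟩
  have hfiber : ∀ P ∈ piSpec (Localization.AtPrime p) ⁻¹' {closedPoint _},
      comapSpec P ∈ piSpec R ⁻¹' {⟨p, inferInstance⟩} := by
    intro P hP
    have hPm : P.1.contract (R := Localization.AtPrime p) = maximalIdeal _ :=
      congrArg PrimeSpectrum.asIdeal hP
    refine PrimeSpectrum.ext ?_
    change (P.1.comap g).contract = p
    rw [TwoSidedIdeal.contract_comap, ← TwoSidedIdeal.comap_contract (Localization.AtPrime p), hPm]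
    exact Localization.AtPrime.under_maximalIdeal
  intro P₁ h₁ P₂ h₂
  exact Subtype.ext <| TwoSidedIdeal.comap_injective_of_isLocalizedModule p.primeCompl g <|
    congrArg Subtype.val (h (hfiber P₁ h₁) (hfiber P₂ h₂))

open TensorProduct in
theorem stmt17_general {R : Type v} {A : Type v} [CommRing R] [Ring A] [Algebra R A]
    [Module.Finite R A]
    (hhomeo : IsHomeomorph (piSpec R (A := A))) :
    ∀ (p : Ideal R) [p.IsPrime], IsLocalRingNC (A ⊗[R] Localization.AtPrime p) := by
  intro p _
  -- The base-change instances (finiteness over `R_p`, `A → R_p ⊗ A` being a localization) are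
  -- stated with `R_p` on the left; transport along `comm` at the end.
  let g : A →ₐ[R] Localization.AtPrime p ⊗[R] A := Algebra.TensorProduct.includeRight
  have : IsLocalizedModule p.primeCompl g.toLinearMap :=
    inferInstanceAs (IsLocalizedModule p.primeCompl (TensorProduct.mk R _ A 1))
  obtain ⟨P, hP⟩ := hhomeo.surjective ⟨p, inferInstance⟩
  have : Nontrivial (Localization.AtPrime p ⊗[R] A) :=
    nontrivial_of_isLocalizedModule p.primeCompl g.toLinearMap fun s (hs : s ∉ p) h0 => hs <| by
      have hPp : P.1.contract = p := congrArg PrimeSpectrum.asIdeal hP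
      simp [← hPp, TwoSidedIdeal.contract, h0]
  refine .of_ringEquiv (Algebra.TensorProduct.comm R _ A).toRingEquiv
    (isLocalRingNC_of_subsingleton_fiber (Localization.AtPrime p) ?_)
  exact subsingleton_fiber_closedPoint_of_isLocalizedModule g
    (Set.subsingleton_singleton.preimage hhomeo.injective)

open TensorProduct in
/-- Let `A` be a ring whose center contains a subring `R` such that `A` is module-finite over
`R`, and suppose `P ↦ P ∩ R` is a homeomorphism `Spec A → Spec R`. Then for every prime ideal
`p` of `R` the central localization `A_p = A ⊗_R R_p` is a local ring (its quotient by its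
Jacobson radical is simple Artinian). -/
theorem stmt17 {R : Type v} {A : Type v} [CommRing R] [Ring A] [Algebra R A]
    (hinj : Function.Injective (algebraMap R A))
    [Module.Finite R A]
    (hhomeo : IsHomeomorph (piSpec R (A := A))) :
    ∀ (p : Ideal R) [p.IsPrime], IsLocalRingNC (A ⊗[R] Localization.AtPrime p) :=
  stmt17_general hhomeo
end
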